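/- arXiv:1603.06610 — 8 statements merged into one kernel-verified Lean document; each statement's English description precedes it below -/
import Mathlib

section
/- Let {c_l} be a nonnegative real sequence, and let ρ1, ρ2, γ be positive constants with ρ2 ≥ ρ1. Define τ1 = ρ1 + γ, τ2 = (ρ2 − ρ1)γ, and ν = (τ1 + sqrt(τ1² + 4τ2))/2. Suppose c_1 ≤ ν c_0 and for all l ≥ 1, c_{l+1} ≤ ρ1 c_l + ρ2 Σ_{j=0}^{l−1} γ^{l−j} c_j. If τ1 + τ2 < 1, then ν < 1 and c_l ≤ ν^l c_0 for all l ≥ 0. -/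
/-!
The rate `ν` is the positive root of `x ^ 2 = τ1 x + τ2`, and `ν < 1` because the quadratic
is positive at `1`. The root satisfies `ν > γ`, so the geometric sums
`∑ j < l, γ ^ (l - j) ν ^ j` are at most `γ ν ^ l / (ν - γ)`; with the quadratic relation this
makes `ν ^ l c 0` a supersolution of the recursion, and strong induction compares `c` with it.
-/

open Finset

theorem sum_range_pow_sub_mul_pow_mul_sub {R : Type*} [CommRing R] (x y : R) (l : ℕ) :
    (∑ j ∈ range l, y ^ (l - j) * x ^ j) * (x - y) = y * (x ^ l - y ^ l) := by
  have hshift : ∑ j ∈ range l, y ^ (l - j) * x ^ j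
      = y * ∑ j ∈ range l, x ^ j * y ^ (l - 1 - j) := by
    rw [mul_sum]
    refine sum_congr rfl fun j hj => ?_
    rw [show l - j = l - 1 - j + 1 by have := mem_range.1 hj; omega, pow_succ]
    ring
  rw [hshift, mul_assoc, geom_sum₂_mul]

section QuadraticRoot

variable {a b : ℝ}

theorem quadratic_root_sq (hb : 0 ≤ b) :
    ((a + √(a ^ 2 + 4 * b)) / 2) ^ 2 = a * ((a + √(a ^ 2 + 4 * b)) / 2) + b := by
  have hs := Real.sq_sqrt (by positivity : 0 ≤ a ^ 2 + 4 * b)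
  linear_combination hs / 4

theorem le_quadratic_root (hb : 0 ≤ b) : a ≤ (a + √(a ^ 2 + 4 * b)) / 2 := by
  have : |a| ≤ √(a ^ 2 + 4 * b) := Real.abs_le_sqrt (by linarith)
  linarith [le_abs_self a]

theorem quadratic_root_lt_one (hb : 0 ≤ b) (hab : a + b < 1) :
    (a + √(a ^ 2 + 4 * b)) / 2 < 1 := by
  have hs : √(a ^ 2 + 4 * b) < 2 - a := (Real.sqrt_lt' (by linarith)).2 (by nlinarith)
  linarith

end QuadraticRoot

theorem pow_succ_ge_of_sq_eq {ρ1 ρ2 γ ν : ℝ} (hρ2 : 0 ≤ ρ2) (hγ : 0 ≤ γ) (hγν : γ < ν)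
    (hν : ν ^ 2 = (ρ1 + γ) * ν + (ρ2 - ρ1) * γ) (l : ℕ) :
    ρ1 * ν ^ l + ρ2 * ∑ j ∈ range l, γ ^ (l - j) * ν ^ j ≤ ν ^ (l + 1) := by
  have hsum := sum_range_pow_sub_mul_pow_mul_sub ν γ l
  rw [← mul_le_mul_iff_left₀ (sub_pos.2 hγν)]
  have : 0 ≤ ρ2 * γ ^ (l + 1) := by positivity
  linear_combination ρ2 * hsum - ν ^ l * hν + this

theorem le_pow_mul_of_recursion {c : ℕ → ℝ} {ρ1 ρ2 γ ν : ℝ}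
    (hρ1 : 0 ≤ ρ1) (hρ2 : 0 ≤ ρ2) (hγ : 0 ≤ γ) (hc0 : 0 ≤ c 0)
    (hsuper : ∀ l, ρ1 * ν ^ l + ρ2 * ∑ j ∈ range l, γ ^ (l - j) * ν ^ j ≤ ν ^ (l + 1))
    (h1 : c 1 ≤ ν * c 0)
    (hrec : ∀ l, 1 ≤ l →
      c (l + 1) ≤ ρ1 * c l + ρ2 * ∑ j ∈ range l, γ ^ (l - j) * c j) (l : ℕ) :
    c l ≤ ν ^ l * c 0 := by
  induction l using Nat.strong_induction_on with
  | _ l ih =>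
  match l with
  | 0 => simp
  | 1 => simpa using h1
  | l + 2 =>
    have hsum : ∑ j ∈ range (l + 1), γ ^ (l + 1 - j) * c j
        ≤ (∑ j ∈ range (l + 1), γ ^ (l + 1 - j) * ν ^ j) * c 0 := by
      rw [sum_mul]
      refine sum_le_sum fun j hj => ?_
      rw [mul_assoc]
      exact mul_le_mul_of_nonneg_left (ih j (by simp at hj; omega)) (by positivity)
    calc c (l + 2)
        ≤ ρ1 * c (l + 1) + ρ2 * ∑ j ∈ range (l + 1), γ ^ (l + 1 - j) * c j := hrec (l + 1) (by omega)
      _ ≤ ρ1 * (ν ^ (l + 1) * c 0)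
            + ρ2 * ((∑ j ∈ range (l + 1), γ ^ (l + 1 - j) * ν ^ j) * c 0) := by
          gcongr
          exact ih (l + 1) (by omega)
      _ = (ρ1 * ν ^ (l + 1) + ρ2 * ∑ j ∈ range (l + 1), γ ^ (l + 1 - j) * ν ^ j) * c 0 := by ring
      _ ≤ ν ^ (l + 2) * c 0 := mul_le_mul_of_nonneg_right (hsuper (l + 1)) hc0

theorem stmt0 (c : ℕ → ℝ) (ρ1 ρ2 γ τ1 τ2 ν : ℝ)
    (hρ1 : 0 < ρ1) (hρ2 : 0 < ρ2) (hγ : 0 < γ) (hρ : ρ1 ≤ ρ2)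
    (hc : ∀ l, 0 ≤ c l)
    (hτ1 : τ1 = ρ1 + γ) (hτ2 : τ2 = (ρ2 - ρ1) * γ)
    (hν : ν = (τ1 + Real.sqrt (τ1 ^ 2 + 4 * τ2)) / 2)
    (h1 : c 1 ≤ ν * c 0)
    (hrec : ∀ l, 1 ≤ l →
      c (l + 1) ≤ ρ1 * c l + ρ2 * ∑ j ∈ Finset.range l, γ ^ (l - j) * c j)
    (hlt : τ1 + τ2 < 1) :
    ν < 1 ∧ ∀ l, c l ≤ ν ^ l * c 0 := by
  have hτ2_nonneg : 0 ≤ τ2 := hτ2 ▸ mul_nonneg (sub_nonneg.2 hρ) hγ.le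
  have hγν : γ < ν := by
    have := hν ▸ le_quadratic_root (a := τ1) hτ2_nonneg
    linarith
  have hνsq : ν ^ 2 = (ρ1 + γ) * ν + (ρ2 - ρ1) * γ := by
    rw [← hτ1, ← hτ2, hν]
    exact quadratic_root_sq hτ2_nonneg
  refine ⟨hν ▸ quadratic_root_lt_one hτ2_nonneg hlt, ?_⟩
  exact le_pow_mul_of_recursion hρ1.le hρ2.le hγ.le (hc 0)
    (pow_succ_ge_of_sq_eq hρ2.le hγ.le hγν hνsq) h1 hrec
end

section
/- Let U_l and U be two n×r real matrices with orthonormal columns. Then there exists an r×r orthogonal matrix Q such that ‖U_l − U Q‖_F ≤ ‖U_l U_lᵀ − U Uᵀ‖_F. -/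
/-!
Put `M = Uᵀ U_l`. Expanding the squares, `‖U_l - U Q‖² = 2r - 2 tr (Qᵀ M)` and
`‖U_l U_lᵀ - U Uᵀ‖² = 2r - 2 tr (Mᵀ M)`. Since `M` is a contraction, the eigenvalues `dᵢ` of
`Mᵀ M` lie in `[0, 1]`. Taking for `Q` the orthogonal factor of a polar decomposition
`M = Q √(Mᵀ M)` gives `tr (Qᵀ M) = ∑ √dᵢ ≥ ∑ dᵢ = tr (Mᵀ M)`.
-/

open Matrix

/-- The Frobenius norm of a real matrix. -/
noncomputable def frobNorm {m n : ℕ} (A : Matrix (Fin m) (Fin n) ℝ) : ℝ :=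
  Real.sqrt (∑ i, ∑ j, (A i j) ^ 2)

lemma frobNorm_eq_sqrt_trace {m n : ℕ} (A : Matrix (Fin m) (Fin n) ℝ) :
    frobNorm A = √((Aᵀ * A).trace) := by
  rw [frobNorm, Matrix.trace, Finset.sum_comm]
  simp [Matrix.diag, Matrix.mul_apply, pow_two]

lemma mulVec_dotProduct_mulVec {m ι : Type*} [Fintype m] [Fintype ι] (B : Matrix m ι ℝ)
    (x y : ι → ℝ) : (B *ᵥ x) ⬝ᵥ (B *ᵥ y) = x ⬝ᵥ ((Bᵀ * B) *ᵥ y) := by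
  rw [dotProduct_mulVec, ← vecMul_transpose, vecMul_vecMul, ← dotProduct_mulVec]

lemma OrthonormalBasis.dotProduct_self_eq_one {ι : Type*} [Fintype ι]
    (b : OrthonormalBasis ι ℝ (EuclideanSpace ℝ ι)) (i : ι) : ⇑(b i) ⬝ᵥ ⇑(b i) = 1 := by
  have := b.inner_eq_one i
  rwa [EuclideanSpace.inner_eq_star_dotProduct, star_trivial] at this

section Isometry

variable {m ι : Type*} [Fintype m] [Fintype ι] [DecidableEq ι] {A B : Matrix m ι ℝ}

lemma transpose_mulVec_dotProduct_self_le (hB : Bᵀ * B = 1) (y : m → ℝ) :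
    (Bᵀ *ᵥ y) ⬝ᵥ (Bᵀ *ᵥ y) ≤ y ⬝ᵥ y := by
  set z := Bᵀ *ᵥ y
  have hyz : y ⬝ᵥ (B *ᵥ z) = z ⬝ᵥ z := by rw [dotProduct_mulVec, ← mulVec_transpose]
  have hzz : (B *ᵥ z) ⬝ᵥ (B *ᵥ z) = z ⬝ᵥ z := by
    rw [mulVec_dotProduct_mulVec, hB, one_mulVec]
  have := dotProduct_self_star_nonneg (y - B *ᵥ z)
  rw [star_trivial, sub_dotProduct, dotProduct_sub, dotProduct_sub, dotProduct_comm (B *ᵥ z) y,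
    hyz, hzz] at this
  linarith

lemma transpose_mul_mulVec_dotProduct_self_le (hA : Aᵀ * A = 1) (hB : Bᵀ * B = 1)
    (x : ι → ℝ) : ((Bᵀ * A) *ᵥ x) ⬝ᵥ ((Bᵀ * A) *ᵥ x) ≤ x ⬝ᵥ x := by
  rw [← mulVec_mulVec]
  calc _ ≤ (A *ᵥ x) ⬝ᵥ (A *ᵥ x) := transpose_mulVec_dotProduct_self_le hB _
    _ = x ⬝ᵥ x := by rw [mulVec_dotProduct_mulVec, hA, one_mulVec]

lemma trace_transpose_mul_sub_self (hA : Aᵀ * A = 1) (hB : Bᵀ * B = 1) :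
    ((A - B)ᵀ * (A - B)).trace = 2 * Fintype.card ι - 2 * (Bᵀ * A).trace := by
  have hBA : (Aᵀ * B).trace = (Bᵀ * A).trace := by
    rw [← trace_transpose, transpose_mul, transpose_transpose]
  rw [transpose_sub, Matrix.sub_mul, Matrix.mul_sub, Matrix.mul_sub, hA, hB]
  simp only [trace_sub, trace_one, hBA]
  ring

lemma trace_transpose_mul_sub_projection (hA : Aᵀ * A = 1) (hB : Bᵀ * B = 1) :
    ((A * Aᵀ - B * Bᵀ)ᵀ * (A * Aᵀ - B * Bᵀ)).trace =
      2 * Fintype.card ι - 2 * ((Bᵀ * A)ᵀ * (Bᵀ * A)).trace := by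
  have hP : ∀ {C : Matrix m ι ℝ}, Cᵀ * C = 1 → ((C * Cᵀ) * (C * Cᵀ)).trace = Fintype.card ι := by
    intro C hC
    rw [Matrix.mul_assoc, ← Matrix.mul_assoc Cᵀ, hC, Matrix.one_mul, trace_mul_comm, hC, trace_one]
  have hAB : ((A * Aᵀ) * (B * Bᵀ)).trace = ((Bᵀ * A)ᵀ * (Bᵀ * A)).trace := by
    simp only [transpose_mul, transpose_transpose, Matrix.mul_assoc]
    rw [trace_mul_comm]
    simp only [Matrix.mul_assoc]
  have hBA : ((B * Bᵀ) * (A * Aᵀ)).trace = ((Bᵀ * A)ᵀ * (Bᵀ * A)).trace := by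
    rw [trace_mul_comm, hAB]
  rw [transpose_sub, transpose_mul, transpose_mul, transpose_transpose, transpose_transpose,
    Matrix.sub_mul, Matrix.mul_sub, Matrix.mul_sub]
  simp only [trace_sub, hP hA, hP hB, hAB, hBA]
  ring

end Isometry

section Polar

variable {ι : Type*} [Fintype ι] [DecidableEq ι] {M : Matrix ι ι ℝ} (hA : (Mᵀ * M).IsHermitian)

lemma mulVec_eigenvectorBasis_dotProduct (i j : ι) :
    (M *ᵥ hA.eigenvectorBasis i) ⬝ᵥ (M *ᵥ hA.eigenvectorBasis j) =
      if i = j then hA.eigenvalues i else 0 := by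
  have h := hA.eigenvectorBasis.inner_eq_ite i j
  rw [EuclideanSpace.inner_eq_star_dotProduct, star_trivial, dotProduct_comm] at h
  rw [mulVec_dotProduct_mulVec, hA.mulVec_eigenvectorBasis, dotProduct_smul, h]
  split_ifs with hij <;> simp [hij]

lemma mulVec_eigenvectorBasis_dotProduct_self (i : ι) :
    (M *ᵥ hA.eigenvectorBasis i) ⬝ᵥ (M *ᵥ hA.eigenvectorBasis i) = hA.eigenvalues i := by
  simpa using mulVec_eigenvectorBasis_dotProduct hA i i

lemma eigenvalues_transpose_mul_self_nonneg (i : ι) : 0 ≤ hA.eigenvalues i := by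
  rw [← mulVec_eigenvectorBasis_dotProduct_self hA i]
  simpa using dotProduct_self_star_nonneg (M *ᵥ hA.eigenvectorBasis i)

lemma eigenvalues_transpose_mul_self_le_one (hM : ∀ x, (M *ᵥ x) ⬝ᵥ (M *ᵥ x) ≤ x ⬝ᵥ x)
    (i : ι) : hA.eigenvalues i ≤ 1 := by
  rw [← mulVec_eigenvectorBasis_dotProduct_self hA i,
    ← hA.eigenvectorBasis.dotProduct_self_eq_one i]
  exact hM _

/- The vectors `M eᵢ / √dᵢ` with `dᵢ ≠ 0` are orthonormal; `b` extends them to a basis, and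
`M eᵢ = 0` when `dᵢ = 0`. -/
lemma exists_orthonormalBasis_mulVec_eigenvectorBasis_eq :
    ∃ b : OrthonormalBasis ι ℝ (EuclideanSpace ℝ ι),
      ∀ i, M *ᵥ hA.eigenvectorBasis i = √(hA.eigenvalues i) • ⇑(b i) := by
  have hd := eigenvalues_transpose_mul_self_nonneg hA
  let v : ι → EuclideanSpace ℝ ι := fun i =>
    WithLp.toLp 2 ((√(hA.eigenvalues i))⁻¹ • (M *ᵥ hA.eigenvectorBasis i))
  have hv : Orthonormal ℝ ({i | hA.eigenvalues i ≠ 0}.domRestrict v) := by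
    rw [orthonormal_iff_ite]
    rintro ⟨i, hi⟩ ⟨j, -⟩
    simp only [Set.domRestrict_apply, v, EuclideanSpace.inner_toLp_toLp, star_trivial,
      smul_dotProduct, dotProduct_smul, mulVec_eigenvectorBasis_dotProduct, Subtype.mk.injEq]
    by_cases hij : i = j
    · subst hij
      rw [if_pos rfl, if_pos rfl, smul_smul, ← mul_inv, Real.mul_self_sqrt (hd i), smul_eq_mul,
        inv_mul_cancel₀ hi]
    · simp [hij, Ne.symm hij]
  obtain ⟨b, hb⟩ := hv.exists_orthonormalBasis_extension_of_card_eq (by simp)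
  refine ⟨b, fun i => ?_⟩
  by_cases hi : hA.eigenvalues i = 0
  · rw [hi, Real.sqrt_zero, zero_smul, ← dotProduct_self_eq_zero,
      mulVec_eigenvectorBasis_dotProduct_self, hi]
  · rw [hb i hi, WithLp.ofLp_toLp, smul_smul, mul_inv_cancel₀, one_smul]
    exact Real.sqrt_ne_zero'.mpr ((hd i).lt_of_ne' hi)

/- `Q` sends the eigenvector `eᵢ` of `Mᵀ M` to `bᵢ`: it is the orthogonal factor of a polar
decomposition `M = Q √(Mᵀ M)`. -/
theorem exists_mem_orthogonalGroup_trace_transpose_mul_eq :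
    ∃ Q ∈ orthogonalGroup ι ℝ, (Qᵀ * M).trace = ∑ i, √(hA.eigenvalues i) := by
  obtain ⟨b, hb⟩ := exists_orthonormalBasis_mulVec_eigenvectorBasis_eq hA
  set E := (EuclideanSpace.basisFun ι ℝ).toBasis.toMatrix hA.eigenvectorBasis
  set B := (EuclideanSpace.basisFun ι ℝ).toBasis.toMatrix b
  have hE := (mem_orthogonalGroup_iff ι ℝ).mp <|
    (EuclideanSpace.basisFun ι ℝ).toMatrix_orthonormalBasis_mem_orthogonal hA.eigenvectorBasis
  have hB := (mem_orthogonalGroup_iff' ι ℝ).mp <|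
    (EuclideanSpace.basisFun ι ℝ).toMatrix_orthonormalBasis_mem_orthogonal b
  refine ⟨B * Eᵀ, ?_, ?_⟩
  · rw [mem_orthogonalGroup_iff', transpose_mul, transpose_transpose, Matrix.mul_assoc,
      ← Matrix.mul_assoc Bᵀ, hB, one_mul, hE]
  · rw [transpose_mul, transpose_transpose, Matrix.mul_assoc, trace_mul_comm, Matrix.mul_assoc]
    refine Finset.sum_congr rfl fun i _ => ?_
    have hdiag : (Bᵀ * (M * E)) i i = ⇑(b i) ⬝ᵥ (M *ᵥ hA.eigenvectorBasis i) := by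
      simp [B, E, mul_apply, mulVec, dotProduct, Module.Basis.toMatrix_apply]
    rw [diag_apply, hdiag, hb, dotProduct_smul, b.dotProduct_self_eq_one, smul_eq_mul, mul_one]

end Polar

theorem exists_mem_orthogonalGroup_trace_transpose_mul_self_le {ι : Type*} [Fintype ι]
    [DecidableEq ι] {M : Matrix ι ι ℝ} (hM : ∀ x, (M *ᵥ x) ⬝ᵥ (M *ᵥ x) ≤ x ⬝ᵥ x) :
    ∃ Q ∈ orthogonalGroup ι ℝ, (Mᵀ * M).trace ≤ (Qᵀ * M).trace := by
  have hA : (Mᵀ * M).IsHermitian := isHermitian_iff_isSymm.mpr (isSymm_transpose_mul_self M)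
  obtain ⟨Q, hQ, htr⟩ := exists_mem_orthogonalGroup_trace_transpose_mul_eq hA
  refine ⟨Q, hQ, ?_⟩
  rw [htr, hA.trace_eq_sum_eigenvalues]
  refine Finset.sum_le_sum fun i _ => ?_
  have h0 := eigenvalues_transpose_mul_self_nonneg hA i
  have h1 := eigenvalues_transpose_mul_self_le_one hA hM i
  rw [RCLike.ofReal_real_eq_id, id, Real.le_sqrt h0 h0]
  nlinarith

theorem stmt3 {n r : ℕ} (Ul U : Matrix (Fin n) (Fin r) ℝ)
    (hUl : Ulᵀ * Ul = 1) (hU : Uᵀ * U = 1) :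
    ∃ Q : Matrix (Fin r) (Fin r) ℝ, Qᵀ * Q = 1 ∧
      frobNorm (Ul - U * Q) ≤ frobNorm (Ul * Ulᵀ - U * Uᵀ) := by
  obtain ⟨Q, hQ, htr⟩ := exists_mem_orthogonalGroup_trace_transpose_mul_self_le
    (transpose_mul_mulVec_dotProduct_self_le hUl hU)
  rw [mem_orthogonalGroup_iff'] at hQ
  have hUQ : (U * Q)ᵀ * (U * Q) = 1 := by
    rw [transpose_mul, Matrix.mul_assoc, ← Matrix.mul_assoc Uᵀ, hU, one_mul, hQ]
  refine ⟨Q, hQ, ?_⟩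
  rw [frobNorm_eq_sqrt_trace, frobNorm_eq_sqrt_trace, trace_transpose_mul_sub_self hUl hUQ,
    trace_transpose_mul_sub_projection hUl hU, transpose_mul, Matrix.mul_assoc]
  gcongr
end

section
/- Under the assumptions that ‖P_T − p⁻¹ P_T A P_T‖ ≤ 4ε with 0 < ε < 1/4, and that α is a real number satisfying 1/((1+4ε)p) ≤ α ≤ 1/((1−4ε)p), one has ‖P_T − α P_T A P_T‖ ≤ 8ε/(1 − 4ε). -/
open Matrix

/-- The Frobenius (trace) inner product of two real matrices. -/
def finner {n : ℕ} (A B : Matrix (Fin n) (Fin n) ℝ) : ℝ :=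
  Matrix.trace (Aᵀ * B)

/-!
Set `M = P_T A P_T` and split `P_T Z - α M Z = (P_T Z - p⁻¹ M Z) + (p⁻¹ - α) M Z`. The first term is
at most `4ε‖Z‖`. As `P_T` is an orthogonal projection, `‖P_T Z‖ ≤ ‖Z‖`, hence also
`‖M Z‖ ≤ (1 + 4ε) p ‖Z‖`, while the range of `α` gives `|p⁻¹ - α| ≤ 4ε / ((1 - 4ε) p)`.
Adding up yields `4ε + 4ε (1 + 4ε) / (1 - 4ε) = 8ε / (1 - 4ε)`.
-/

open scoped InnerProductSpace

theorem norm_le_of_inner_self_eq_inner {E : Type*} [SeminormedAddCommGroup E]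
    [InnerProductSpace ℝ E] {u x : E} (h : ⟪u, u⟫_ℝ = ⟪x, u⟫_ℝ) : ‖u‖ ≤ ‖x‖ := by
  rcases (norm_nonneg u).eq_or_lt with hu | hu
  · rw [← hu]; exact norm_nonneg x
  · refine le_of_mul_le_mul_right ?_ hu
    rw [← real_inner_self_eq_norm_mul_norm, h]
    exact real_inner_le_norm x u

theorem abs_inv_sub_le_of_le_of_le {p δ α : ℝ} (hp : 0 < p) (hδ : 0 ≤ δ) (hδ' : δ < 1)
    (hα₁ : 1 / ((1 + δ) * p) ≤ α) (hα₂ : α ≤ 1 / ((1 - δ) * p)) :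
    |p⁻¹ - α| ≤ δ / ((1 - δ) * p) := by
  have hminus : 0 < (1 - δ) * p := by nlinarith
  have hplus : 0 < (1 + δ) * p := by nlinarith
  rw [div_le_iff₀ hplus] at hα₁
  rw [le_div_iff₀ hminus] at hα₂
  have hp' : p⁻¹ * p = 1 := inv_mul_cancel₀ hp.ne'
  rw [le_div_iff₀ hminus]
  rcases abs_cases (p⁻¹ - α) with ⟨h, hs⟩ | ⟨h, hs⟩ <;> rw [h]
  · nlinarith [mul_nonneg hs hδ]
  · nlinarith

theorem norm_sub_smul_le_of_norm_sub_inv_smul_le {E : Type*} [SeminormedAddCommGroup E]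
    [NormedSpace ℝ E]
    {u v : E} {p δ α r : ℝ} (hp : 0 < p) (hδ : 0 ≤ δ) (hδ' : δ < 1)
    (hu : ‖u‖ ≤ r) (huv : ‖u - p⁻¹ • v‖ ≤ δ * r)
    (hα₁ : 1 / ((1 + δ) * p) ≤ α) (hα₂ : α ≤ 1 / ((1 - δ) * p)) :
    ‖u - α • v‖ ≤ 2 * δ / (1 - δ) * r := by
  have hv : ‖v‖ ≤ (1 + δ) * p * r := by
    calc ‖v‖ = ‖p • (u - (u - p⁻¹ • v))‖ := by rw [sub_sub_cancel, smul_inv_smul₀ hp.ne']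
      _ = p * ‖u - (u - p⁻¹ • v)‖ := by rw [norm_smul, Real.norm_of_nonneg hp.le]
      _ ≤ p * (r + δ * r) := by gcongr; exact (norm_sub_le _ _).trans (add_le_add hu huv)
      _ = (1 + δ) * p * r := by ring
  have hsplit : u - α • v = (u - p⁻¹ • v) + (p⁻¹ - α) • v := by
    rw [sub_smul]; abel
  calc ‖u - α • v‖ ≤ ‖u - p⁻¹ • v‖ + |p⁻¹ - α| * ‖v‖ := by
        rw [hsplit, ← Real.norm_eq_abs, ← norm_smul]; exact norm_add_le _ _
    _ ≤ δ * r + δ / ((1 - δ) * p) * ((1 + δ) * p * r) := by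
        gcongr
        exact abs_inv_sub_le_of_le_of_le hp hδ hδ' hα₁ hα₂
    _ = 2 * δ / (1 - δ) * r := by
        have : 1 - δ ≠ 0 := by linarith
        field_simp; ring

noncomputable def frobeniusEuclidean {m n : ℕ} :
    Matrix (Fin m) (Fin n) ℝ →ₗ[ℝ] EuclideanSpace ℝ (Fin m × Fin n) where
  toFun A := WithLp.toLp 2 fun q => A q.1 q.2
  map_add' _ _ := rfl
  map_smul' _ _ := rfl

@[simp]
theorem frobeniusEuclidean_apply {m n : ℕ} (A : Matrix (Fin m) (Fin n) ℝ) (q : Fin m × Fin n) :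
    frobeniusEuclidean A q = A q.1 q.2 :=
  rfl

theorem frobNorm_eq_norm_frobeniusEuclidean {m n : ℕ} (A : Matrix (Fin m) (Fin n) ℝ) :
    frobNorm A = ‖frobeniusEuclidean A‖ := by
  rw [EuclideanSpace.norm_eq, frobNorm, Fintype.sum_prod_type]
  simp

theorem finner_eq_inner_frobeniusEuclidean {n : ℕ} (A B : Matrix (Fin n) (Fin n) ℝ) :
    finner A B = ⟪frobeniusEuclidean A, frobeniusEuclidean B⟫_ℝ := by
  rw [finner, Matrix.trace, PiLp.inner_apply, Fintype.sum_prod_type, Finset.sum_comm]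
  simp [Matrix.diag, Matrix.mul_apply, mul_comm]

theorem frobNorm_map_le_of_idempotent_of_symm {n : ℕ}
    (P : Matrix (Fin n) (Fin n) ℝ →ₗ[ℝ] Matrix (Fin n) (Fin n) ℝ)
    (hPproj : ∀ Z, P (P Z) = P Z) (hPsa : ∀ Y Z, finner (P Y) Z = finner Y (P Z))
    (Z : Matrix (Fin n) (Fin n) ℝ) : frobNorm (P Z) ≤ frobNorm Z := by
  rw [frobNorm_eq_norm_frobeniusEuclidean, frobNorm_eq_norm_frobeniusEuclidean]
  apply norm_le_of_inner_self_eq_inner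
  rw [← finner_eq_inner_frobeniusEuclidean, ← finner_eq_inner_frobeniusEuclidean, hPsa, hPproj]

theorem stmt7_general {n : ℕ}
    (P A : Matrix (Fin n) (Fin n) ℝ →ₗ[ℝ] Matrix (Fin n) (Fin n) ℝ)
    (hPproj : ∀ Z, P (P Z) = P Z)
    (hPsa : ∀ Y Z, finner (P Y) Z = finner Y (P Z))
    (p ε α : ℝ) (hp : 0 < p) (hε : 0 < ε) (hε' : ε < 1 / 4)
    (hbound : ∀ Z, frobNorm (P Z - p⁻¹ • P (A (P Z))) ≤ 4 * ε * frobNorm Z)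
    (hα₁ : 1 / ((1 + 4 * ε) * p) ≤ α) (hα₂ : α ≤ 1 / ((1 - 4 * ε) * p)) :
    ∀ Z : Matrix (Fin n) (Fin n) ℝ,
      frobNorm (P Z - α • P (A (P Z))) ≤ 8 * ε / (1 - 4 * ε) * frobNorm Z := by
  intro Z
  have hPZ := frobNorm_map_le_of_idempotent_of_symm P hPproj hPsa Z
  have hBZ := hbound Z
  simp only [frobNorm_eq_norm_frobeniusEuclidean, map_sub, map_smul] at hPZ hBZ ⊢
  convert norm_sub_smul_le_of_norm_sub_inv_smul_le hp (by positivity) (by linarith) hPZ hBZ hα₁ hα₂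
    using 2
  ring

theorem stmt7 {n : ℕ}
    (P A : Matrix (Fin n) (Fin n) ℝ →ₗ[ℝ] Matrix (Fin n) (Fin n) ℝ)
    (hPproj : ∀ Z, P (P Z) = P Z)
    (hPsa : ∀ Y Z, finner (P Y) Z = finner Y (P Z))
    (hAsa : ∀ Y Z, finner (A Y) Z = finner Y (A Z))
    (p ε α : ℝ) (hp : 0 < p) (hε : 0 < ε) (hε' : ε < 1 / 4)
    (hbound : ∀ Z, frobNorm (P Z - p⁻¹ • P (A (P Z))) ≤ 4 * ε * frobNorm Z)
    (hα₁ : 1 / ((1 + 4 * ε) * p) ≤ α) (hα₂ : α ≤ 1 / ((1 - 4 * ε) * p)) :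
    ∀ Z : Matrix (Fin n) (Fin n) ℝ,
      frobNorm (P Z - α • P (A (P Z))) ≤ 8 * ε / (1 - 4 * ε) * frobNorm Z :=
  stmt7_general P A hPproj hPsa p ε α hp hε hε' hbound hα₁ hα₂
end

section
/- Let X_l = U_l Σ_l V_lᵀ and X = U Σ Vᵀ be two n×n real rank-r matrices (reduced SVDs), with σ_min(X) the smallest nonzero singular value of X. Then ‖U_l U_lᵀ − U Uᵀ‖ ≤ ‖X_l − X‖_F / σ_min(X), where ‖·‖ is the spectral norm. -/
open Matrix

/-- The spectral (operator) norm of a real matrix. -/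
noncomputable def specNorm {m n : ℕ} (A : Matrix (Fin m) (Fin n) ℝ) : ℝ :=
  ‖LinearMap.toContinuousLinearMap (Matrix.toEuclideanLin A)‖

/-
Write `Q = U_l U_lᵀ` and `P = U Uᵀ`. Since `(1 - Q) X_l = 0` and `X V = U Σ`, we get
`(1 - Q) U Σ = (1 - Q) (X - X_l) V`, hence `‖(1 - Q) U‖ ≤ ‖X - X_l‖ / σ_min ≤ ‖X - X_l‖_F / σ_min`.
For orthogonal projections, `Q - P = (1 - P) Q · Q - P (1 - Q) · (1 - Q)` splits every vector
into two orthogonal pieces, so `‖Q - P‖ ≤ max (‖(1 - Q) P‖, ‖(1 - P) Q‖)`, and by the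
C⋆-identity `‖(1 - Q) P‖ = ‖(1 - Q) U‖`, `‖(1 - P) Q‖ = ‖(1 - P) U_l‖`. These two "sin Θ" norms
coincide because both subspaces have dimension `r`: their squares are `‖1 - BᵀB‖` and
`‖1 - BBᵀ‖` for the square matrix `B = U_lᵀ U`, and `BᵀB`, `BBᵀ` have the same characteristic
polynomial, hence the same spectrum.
-/

open scoped Matrix.Norms.L2Operator InnerProductSpace

section Spectrum

variable {𝕜 A : Type*} {p : A → Prop} [RCLike 𝕜] [NormedRing A] [StarRing A]
  [NormedAlgebra 𝕜 A] [IsometricContinuousFunctionalCalculus 𝕜 A p]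

theorem norm_le_norm_of_spectrum_subset {a b : A} (ha : p a) (hb : p b)
    (h : spectrum 𝕜 a ⊆ spectrum 𝕜 b) : ‖a‖ ≤ ‖b‖ := by
  rw [← cfc_id 𝕜 a ha, norm_cfc_le_iff id a (norm_nonneg b)]
  exact fun x hx => IsometricContinuousFunctionalCalculus.norm_spectrum_le b (h hx)

end Spectrum

theorem Matrix.spectrum_mul_comm {n K : Type*} [Fintype n] [DecidableEq n] [Field K]
    (A B : Matrix n n K) : spectrum K (A * B) = spectrum K (B * A) := by
  ext x
  simp only [mem_spectrum_iff_isRoot_charpoly, charpoly_mul_comm]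

theorem Matrix.l2_opNorm_one_sub_mul_transpose_comm {n : Type*} [Fintype n] [DecidableEq n]
    (B : Matrix n n ℝ) : ‖1 - B * Bᵀ‖ = ‖1 - Bᵀ * B‖ := by
  have hsa : ∀ C : Matrix n n ℝ, IsSelfAdjoint (1 - C * Cᵀ) := fun C => by
    simpa [star_eq_conjTranspose] using (IsSelfAdjoint.one _).sub (IsSelfAdjoint.mul_star_self C)
  have hsa' : IsSelfAdjoint (1 - Bᵀ * B) := by simpa using hsa Bᵀ
  have hspec : spectrum ℝ (1 - B * Bᵀ) = spectrum ℝ (1 - Bᵀ * B) := by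
    simp only [← map_one (algebraMap ℝ (Matrix n n ℝ)), ← spectrum.singleton_sub_eq,
      spectrum_mul_comm]
  exact le_antisymm (norm_le_norm_of_spectrum_subset (hsa B) hsa' hspec.le)
    (norm_le_norm_of_spectrum_subset hsa' (hsa B) hspec.ge)

namespace ContinuousLinearMap

variable {𝕜 E : Type*} [RCLike 𝕜] [NormedAddCommGroup E] [InnerProductSpace 𝕜 E]
  [CompleteSpace E] {p q : E →L[𝕜] E}

theorem inner_one_sub_apply_apply_eq_zero (hq : IsStarProjection q) (x y : E) :
    ⟪(1 - q) x, q y⟫_𝕜 = 0 := by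
  rw [← adjoint_inner_left, ← star_eq_adjoint, hq.isSelfAdjoint.star_eq, ← mul_apply_eq_comp,
    hq.mul_one_sub_self, _root_.zero_apply, inner_zero_left]

theorem norm_sq_eq_norm_sq_apply_add_norm_sq_one_sub_apply (hp : IsStarProjection p)
    (x : E) : ‖x‖ ^ 2 = ‖p x‖ ^ 2 + ‖(1 - p) x‖ ^ 2 := by
  have h := norm_add_sq_eq_norm_sq_add_norm_sq_of_inner_eq_zero _ _
    (inner_one_sub_apply_apply_eq_zero hp x x)
  rw [_root_.sub_apply, one_apply_eq_self, sub_add_cancel, ← sq, ← sq, ← sq] at h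
  rw [h, add_comm, _root_.sub_apply, one_apply_eq_self]

theorem norm_sub_le_of_isStarProjection (hp : IsStarProjection p) (hq : IsStarProjection q)
    {ε : ℝ} (hpq : ‖(1 - p) * q‖ ≤ ε) (hqp : ‖(1 - q) * p‖ ≤ ε) : ‖p - q‖ ≤ ε := by
  have hε : 0 ≤ ε := (norm_nonneg _).trans hpq
  have hqp' : ‖q * (1 - p)‖ ≤ ε := by
    rwa [← norm_star, star_mul, star_sub, star_one, hp.isSelfAdjoint.star_eq,
      hq.isSelfAdjoint.star_eq]
  have hsplit : p - q = (1 - q) * p * p - q * (1 - p) * (1 - p) := by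
    simp only [mul_assoc, hp.isIdempotentElem.eq, hp.one_sub.isIdempotentElem.eq]
    noncomm_ring
  refine opNorm_le_bound _ hε fun x => ?_
  have horth : ⟪((1 - q) * p) (p x), -(q * (1 - p)) ((1 - p) x)⟫_𝕜 = 0 := by
    rw [inner_neg_right, mul_apply_eq_comp, mul_apply_eq_comp,
      inner_one_sub_apply_apply_eq_zero hq, neg_zero]
  have hpyth := norm_add_sq_eq_norm_sq_add_norm_sq_of_inner_eq_zero _ _ horth
  rw [← sq, ← sq, ← sq, norm_neg] at hpyth
  rw [← sq_le_sq₀ (norm_nonneg _) (by positivity), hsplit, _root_.sub_apply,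
    mul_apply_eq_comp _ p, mul_apply_eq_comp _ (1 - p), sub_eq_add_neg, hpyth, mul_pow,
    norm_sq_eq_norm_sq_apply_add_norm_sq_one_sub_apply hp x, mul_add]
  gcongr ?_ + ?_ <;> rw [← mul_pow] <;> gcongr <;> exact (le_opNorm _ _).trans (by gcongr)

end ContinuousLinearMap

namespace Matrix

variable {k m n : Type*} [Fintype k] [Fintype m] [Fintype n] [DecidableEq n]

theorem l2_opNorm_sub_le_of_isStarProjection [DecidableEq m] {P Q : Matrix m m ℝ}
    (hP : IsStarProjection P) (hQ : IsStarProjection Q) {ε : ℝ} (hPQ : ‖(1 - P) * Q‖ ≤ ε)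
    (hQP : ‖(1 - Q) * P‖ ≤ ε) : ‖P - Q‖ ≤ ε := by
  simp only [cstar_norm_def, map_sub, map_mul, map_one] at hPQ hQP ⊢
  exact ContinuousLinearMap.norm_sub_le_of_isStarProjection (hP.map _) (hQ.map _) hPQ hQP

theorem l2_opNorm_transpose [DecidableEq m] (B : Matrix m n ℝ) : ‖Bᵀ‖ = ‖B‖ := by
  rw [← conjTranspose_eq_transpose_of_trivial, l2_opNorm_conjTranspose]

theorem l2_opNorm_transpose_mul_self (B : Matrix m n ℝ) : ‖Bᵀ * B‖ = ‖B‖ * ‖B‖ := by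
  rw [← conjTranspose_eq_transpose_of_trivial, l2_opNorm_conjTranspose_mul_self]

theorem l2_opNorm_mul_transpose_self [DecidableEq m] (B : Matrix m n ℝ) :
    ‖B * Bᵀ‖ = ‖B‖ * ‖B‖ := by
  simpa [l2_opNorm_transpose] using l2_opNorm_transpose_mul_self Bᵀ

theorem isStarProjection_mul_transpose {W : Matrix m n ℝ} (hW : Wᵀ * W = 1) :
    IsStarProjection (W * Wᵀ) where
  isIdempotentElem := by
    rw [IsIdempotentElem, Matrix.mul_assoc, ← Matrix.mul_assoc Wᵀ, hW, Matrix.one_mul]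
  isSelfAdjoint := by
    rw [IsSelfAdjoint, star_eq_conjTranspose, conjTranspose_eq_transpose_of_trivial,
      transpose_mul, transpose_transpose]

theorem l2_opNorm_le_one_of_transpose_mul_self [DecidableEq m] {W : Matrix m n ℝ}
    (hW : Wᵀ * W = 1) : ‖W‖ ≤ 1 := by
  have h := (isStarProjection_mul_transpose hW).norm_le
  rw [l2_opNorm_mul_transpose_self] at h
  nlinarith [norm_nonneg W]

theorem l2_opNorm_mul_mul_transpose [DecidableEq k] [DecidableEq m] {W : Matrix m n ℝ}
    (hW : Wᵀ * W = 1) (A : Matrix k m ℝ) :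
    ‖A * (W * Wᵀ)‖ = ‖A * W‖ := by
  have h : A * (W * Wᵀ) * (A * (W * Wᵀ))ᵀ = A * W * (A * W)ᵀ := by
    simp only [transpose_mul, transpose_transpose, Matrix.mul_assoc]
    rw [← Matrix.mul_assoc Wᵀ W, hW, Matrix.one_mul]
  rw [← mul_self_inj (norm_nonneg _) (norm_nonneg _), ← l2_opNorm_mul_transpose_self,
    ← l2_opNorm_mul_transpose_self, h]

theorem transpose_mul_self_one_sub_mul_transpose_mul [DecidableEq m]
    {W₁ W₂ : Matrix m n ℝ} (hW₁ : W₁ᵀ * W₁ = 1) (hW₂ : W₂ᵀ * W₂ = 1) :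
    ((1 - W₁ * W₁ᵀ) * W₂)ᵀ * ((1 - W₁ * W₁ᵀ) * W₂) = 1 - (W₁ᵀ * W₂)ᵀ * (W₁ᵀ * W₂) := by
  simp only [transpose_mul, transpose_sub, transpose_transpose, Matrix.sub_mul,
    Matrix.mul_sub, Matrix.one_mul, Matrix.mul_assoc, hW₂]
  rw [← Matrix.mul_assoc W₁ᵀ W₁, hW₁, Matrix.one_mul]
  abel

theorem l2_opNorm_one_sub_mul_transpose_mul_comm [DecidableEq m] {W₁ W₂ : Matrix m n ℝ}
    (hW₁ : W₁ᵀ * W₁ = 1) (hW₂ : W₂ᵀ * W₂ = 1) :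
    ‖(1 - W₁ * W₁ᵀ) * W₂‖ = ‖(1 - W₂ * W₂ᵀ) * W₁‖ := by
  have hB : W₂ᵀ * W₁ = (W₁ᵀ * W₂)ᵀ := by rw [transpose_mul, transpose_transpose]
  rw [← mul_self_inj (norm_nonneg _) (norm_nonneg _), ← l2_opNorm_transpose_mul_self,
    ← l2_opNorm_transpose_mul_self, transpose_mul_self_one_sub_mul_transpose_mul hW₁ hW₂,
    transpose_mul_self_one_sub_mul_transpose_mul hW₂ hW₁, hB, transpose_transpose,
    l2_opNorm_one_sub_mul_transpose_comm]

theorem l2_opNorm_mul_transpose_sub_le [DecidableEq m] {W₁ W₂ : Matrix m n ℝ}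
    (hW₁ : W₁ᵀ * W₁ = 1) (hW₂ : W₂ᵀ * W₂ = 1) :
    ‖W₁ * W₁ᵀ - W₂ * W₂ᵀ‖ ≤ ‖(1 - W₁ * W₁ᵀ) * W₂‖ := by
  refine l2_opNorm_sub_le_of_isStarProjection (isStarProjection_mul_transpose hW₁)
    (isStarProjection_mul_transpose hW₂) ?_ ?_
  · rw [l2_opNorm_mul_mul_transpose hW₂]
  · rw [l2_opNorm_mul_mul_transpose hW₁, l2_opNorm_one_sub_mul_transpose_mul_comm hW₁ hW₂]

theorem l2_opNorm_le_div_of_le_diagonal (A : Matrix m n ℝ) {d : n → ℝ} {σ : ℝ} (hσ : 0 < σ)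
    (hd : ∀ i, σ ≤ d i) : ‖A‖ ≤ ‖A * diagonal d‖ / σ := by
  have hinv : diagonal d * diagonal d⁻¹ = 1 := by
    rw [diagonal_mul_diagonal, ← diagonal_one]
    exact congrArg diagonal (funext fun i => mul_inv_cancel₀ (hσ.trans_le (hd i)).ne')
  have hnorm : ‖(diagonal d⁻¹ : Matrix n n ℝ)‖ ≤ σ⁻¹ := by
    rw [l2_opNorm_diagonal, pi_norm_le_iff_of_nonneg (by positivity)]
    intro i
    rw [Pi.inv_apply, norm_inv, Real.norm_of_nonneg (hσ.le.trans (hd i))]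
    exact inv_anti₀ hσ (hd i)
  calc ‖A‖ = ‖A * diagonal d * diagonal d⁻¹‖ := by
        rw [Matrix.mul_assoc, hinv, Matrix.mul_one]
    _ ≤ ‖A * diagonal d‖ * σ⁻¹ := (l2_opNorm_mul _ _).trans (by gcongr)
    _ = ‖A * diagonal d‖ / σ := (div_eq_mul_inv _ _).symm

theorem l2_opNorm_one_sub_mul_transpose_mul_le [DecidableEq k] [DecidableEq m]
    {Ul U : Matrix m n ℝ} {V : Matrix k n ℝ} (hUl : Ulᵀ * Ul = 1) (hV : Vᵀ * V = 1)
    (M : Matrix n k ℝ) {d : n → ℝ} {σ : ℝ} (hσ : 0 < σ) (hd : ∀ i, σ ≤ d i) :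
    ‖(1 - Ul * Ulᵀ) * U‖ ≤ ‖Ul * M - U * diagonal d * Vᵀ‖ / σ := by
  have hUl₀ : (1 - Ul * Ulᵀ) * Ul = 0 := by
    rw [Matrix.sub_mul, Matrix.one_mul, Matrix.mul_assoc, hUl, Matrix.mul_one, sub_self]
  have key : (1 - Ul * Ulᵀ) * U * diagonal d
      = (1 - Ul * Ulᵀ) * (U * diagonal d * Vᵀ - Ul * M) * V := by
    rw [Matrix.mul_sub, ← Matrix.mul_assoc _ Ul, hUl₀, Matrix.zero_mul, sub_zero,
      Matrix.mul_assoc, Matrix.mul_assoc, Matrix.mul_assoc, hV, Matrix.mul_one]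
  have hQ : ‖1 - Ul * Ulᵀ‖ ≤ 1 := (isStarProjection_mul_transpose hUl).one_sub.norm_le
  calc ‖(1 - Ul * Ulᵀ) * U‖ ≤ ‖(1 - Ul * Ulᵀ) * U * diagonal d‖ / σ :=
        l2_opNorm_le_div_of_le_diagonal _ hσ hd
    _ ≤ ‖Ul * M - U * diagonal d * Vᵀ‖ / σ := by
        gcongr
        rw [key, norm_sub_rev]
        calc _ ≤ ‖1 - Ul * Ulᵀ‖ * ‖U * diagonal d * Vᵀ - Ul * M‖ * ‖V‖ :=
              (l2_opNorm_mul _ _).trans (by gcongr; exact l2_opNorm_mul _ _)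
          _ ≤ 1 * ‖U * diagonal d * Vᵀ - Ul * M‖ * 1 := by
              gcongr
              exact l2_opNorm_le_one_of_transpose_mul_self hV
          _ = _ := by ring

end Matrix

theorem l2_opNorm_le_frobNorm {m n : ℕ} (A : Matrix (Fin m) (Fin n) ℝ) :
    ‖A‖ ≤ frobNorm A := by
  have hA : 0 ≤ frobNorm A := Real.sqrt_nonneg _
  refine ContinuousLinearMap.opNorm_le_bound _ hA fun x => ?_
  rw [← sq_le_sq₀ (norm_nonneg _) (by positivity), mul_pow, frobNorm,
    Real.sq_sqrt (by positivity), EuclideanSpace.norm_sq_eq, EuclideanSpace.norm_sq_eq,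
    Finset.sum_mul]
  gcongr with i
  simpa [mulVec, dotProduct] using
    Finset.sum_mul_sq_le_sq_mul_sq Finset.univ (A i) x.ofLp

theorem stmt9_general {n r : ℕ} [NeZero r]
    (Ul U Vl V : Matrix (Fin n) (Fin r) ℝ)
    (dl d : Fin r → ℝ) (hd : ∀ i, 0 < d i)
    (hUl : Ulᵀ * Ul = 1) (hU : Uᵀ * U = 1) (hV : Vᵀ * V = 1)
    (Xl X : Matrix (Fin n) (Fin n) ℝ)
    (hXl : Xl = Ul * Matrix.diagonal dl * Vlᵀ)
    (hX : X = U * Matrix.diagonal d * Vᵀ) :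
    specNorm (Ul * Ulᵀ - U * Uᵀ) ≤ frobNorm (Xl - X) / (⨅ i, d i) := by
  obtain ⟨i₀, hi₀⟩ := exists_eq_ciInf_of_finite (f := d)
  have hσ : 0 < ⨅ i, d i := hi₀ ▸ hd i₀
  have hσd : ∀ i, ⨅ j, d j ≤ d i := ciInf_le (Finite.bddBelow_range d)
  calc specNorm (Ul * Ulᵀ - U * Uᵀ) ≤ ‖(1 - Ul * Ulᵀ) * U‖ :=
        Matrix.l2_opNorm_mul_transpose_sub_le hUl hU
    _ ≤ ‖Xl - X‖ / ⨅ i, d i := by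
        rw [hXl, hX, Matrix.mul_assoc Ul]
        exact Matrix.l2_opNorm_one_sub_mul_transpose_mul_le hUl hV _ hσ hσd
    _ ≤ frobNorm (Xl - X) / ⨅ i, d i := by
        gcongr
        exact l2_opNorm_le_frobNorm _

theorem stmt9 {n r : ℕ} [NeZero r]
    (Ul U Vl V : Matrix (Fin n) (Fin r) ℝ)
    (dl d : Fin r → ℝ) (hdl : ∀ i, 0 < dl i) (hd : ∀ i, 0 < d i)
    (hUl : Ulᵀ * Ul = 1) (hU : Uᵀ * U = 1) (hVl : Vlᵀ * Vl = 1) (hV : Vᵀ * V = 1)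
    (Xl X : Matrix (Fin n) (Fin n) ℝ)
    (hXl : Xl = Ul * Matrix.diagonal dl * Vlᵀ)
    (hX : X = U * Matrix.diagonal d * Vᵀ) :
    specNorm (Ul * Ulᵀ - U * Uᵀ) ≤ frobNorm (Xl - X) / (⨅ i, d i) :=
  stmt9_general Ul U Vl V dl d hd hUl hU hV Xl X hXl hX
end

section
/- Let X_l = U_l Σ_l V_lᵀ and X = U Σ Vᵀ be two n×n rank-r matrices with reduced SVDs. Then ‖U_l U_lᵀ − U Uᵀ‖_F ≤ √2 ‖X_l − X‖_F / σ_min(X). -/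
open Matrix

noncomputable def fsq {m n : ℕ} (A : Matrix (Fin m) (Fin n) ℝ) : ℝ :=
  ∑ i, ∑ j, (A i j) ^ 2

lemma fsq_nonneg {m n : ℕ} (A : Matrix (Fin m) (Fin n) ℝ) : 0 ≤ fsq A :=
  Finset.sum_nonneg fun _ _ => Finset.sum_nonneg fun _ _ => sq_nonneg _

lemma fsq_eq_trace {m n : ℕ} (A : Matrix (Fin m) (Fin n) ℝ) :
    fsq A = (Aᵀ * A).trace := by
  simp only [Matrix.trace, Matrix.diag, Matrix.mul_apply, Matrix.transpose_apply, fsq, sq]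
  rw [Finset.sum_comm]

lemma frobNorm_eq {m n : ℕ} (A : Matrix (Fin m) (Fin n) ℝ) :
    frobNorm A = Real.sqrt (fsq A) := rfl

lemma fsq_neg_sub {m n : ℕ} (A B : Matrix (Fin m) (Fin n) ℝ) :
    fsq (A - B) = fsq (B - A) := by
  unfold fsq
  congr 1; ext i; congr 1; ext j
  simp only [Matrix.sub_apply]; ring

section Aux

variable {n r : ℕ} (W : Matrix (Fin n) (Fin r) ℝ) (hW : Wᵀ * W = 1)

include hW

lemma proj_idem : (W * Wᵀ) * (W * Wᵀ) = W * Wᵀ := by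
  rw [Matrix.mul_assoc, ← Matrix.mul_assoc Wᵀ, hW, Matrix.one_mul]

lemma one_sub_proj_idem : (1 - W * Wᵀ) * (1 - W * Wᵀ) = 1 - W * Wᵀ := by
  rw [Matrix.mul_sub, Matrix.sub_mul, Matrix.sub_mul, proj_idem W hW,
    Matrix.one_mul, Matrix.one_mul, Matrix.mul_one]
  abel

lemma proj_symm : (W * Wᵀ)ᵀ = W * Wᵀ := by
  rw [Matrix.transpose_mul, Matrix.transpose_transpose]

lemma one_sub_proj_symm : (1 - W * Wᵀ)ᵀ = 1 - W * Wᵀ := by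
  rw [Matrix.transpose_sub, Matrix.transpose_one, proj_symm W hW]

/-- fsq of M with the projection 1 - WWᵀ: fsq ((1-WWᵀ)M) = fsq M - fsq (Wᵀ M). -/
lemma fsq_one_sub_proj {m : ℕ} (N : Matrix (Fin n) (Fin m) ℝ) :
    fsq ((1 - W * Wᵀ) * N) = fsq N - fsq (Wᵀ * N) := by
  have e1 : ((1 - W * Wᵀ) * N)ᵀ * ((1 - W * Wᵀ) * N) = Nᵀ * ((1 - W * Wᵀ) * N) := by
    rw [Matrix.transpose_mul, one_sub_proj_symm W hW, Matrix.mul_assoc,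
      ← Matrix.mul_assoc (1 - W * Wᵀ), one_sub_proj_idem W hW]
  have e2 : fsq (Wᵀ * N) = (Nᵀ * ((W * Wᵀ) * N)).trace := by
    rw [fsq_eq_trace, Matrix.transpose_mul, Matrix.transpose_transpose]
    congr 1
    rw [Matrix.mul_assoc, Matrix.mul_assoc]
  rw [fsq_eq_trace ((1 - W * Wᵀ) * N), fsq_eq_trace N, e2, e1, Matrix.sub_mul,
    Matrix.one_mul, Matrix.mul_sub, Matrix.trace_sub]

lemma fsq_proj_le {m : ℕ} (N : Matrix (Fin n) (Fin m) ℝ) :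
    fsq ((1 - W * Wᵀ) * N) ≤ fsq N := by
  rw [fsq_one_sub_proj W hW]
  linarith [fsq_nonneg (Wᵀ * N)]

/-- fsq of right multiplication by Wᵀ. -/
lemma fsq_mul_transpose {m : ℕ} (A : Matrix (Fin m) (Fin r) ℝ) :
    fsq (A * Wᵀ) = fsq A := by
  have h : A * Wᵀ * W = A := by rw [Matrix.mul_assoc, hW, Matrix.mul_one]
  calc fsq (A * Wᵀ) = ((A * Wᵀ)ᵀ * (A * Wᵀ)).trace := fsq_eq_trace _
    _ = (W * (Aᵀ * (A * Wᵀ))).trace := by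
        rw [Matrix.transpose_mul, Matrix.transpose_transpose, Matrix.mul_assoc]
    _ = ((Aᵀ * (A * Wᵀ)) * W).trace := Matrix.trace_mul_comm _ _
    _ = (Aᵀ * (A * Wᵀ * W)).trace := by rw [Matrix.mul_assoc, Matrix.mul_assoc]
    _ = fsq A := by rw [h, ← fsq_eq_trace]

end Aux

theorem stmt10 {n r : ℕ} [NeZero r]
    (Ul U Vl V : Matrix (Fin n) (Fin r) ℝ)
    (dl d : Fin r → ℝ) (hdl : ∀ i, 0 < dl i) (hd : ∀ i, 0 < d i)
    (hUl : Ulᵀ * Ul = 1) (hU : Uᵀ * U = 1) (hVl : Vlᵀ * Vl = 1) (hV : Vᵀ * V = 1)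
    (Xl X : Matrix (Fin n) (Fin n) ℝ)
    (hXl : Xl = Ul * Matrix.diagonal dl * Vlᵀ)
    (hX : X = U * Matrix.diagonal d * Vᵀ) :
    frobNorm (Ul * Ulᵀ - U * Uᵀ)
      ≤ Real.sqrt 2 * frobNorm (Xl - X) / (⨅ i, d i) := by
  -- the infimum
  obtain ⟨i0, hi0⟩ := Finite.exists_min d
  set c : ℝ := ⨅ i, d i with hc
  have hcle : ∀ j, c ≤ d j := fun j => ciInf_le (Finite.bddBelow_range d) j
  have hc0 : 0 < c := lt_of_lt_of_le (hd i0) (le_ciInf hi0)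
  have hcard : ((Fintype.card (Fin r) : ℝ)) = (r : ℝ) := by simp
  -- abbreviations (plain haves, not set, to avoid unfolding issues)
  -- Step A : fsq (UlUlᵀ - UUᵀ) = 2 * fsq ((1 - UlUlᵀ) U)
  have keytr : (Uᵀ * ((Ul * Ulᵀ) * U)).trace = ((Ul * Ulᵀ) * (U * Uᵀ)).trace := by
    rw [Matrix.trace_mul_comm, Matrix.mul_assoc]
  have stepA : fsq (Ul * Ulᵀ - U * Uᵀ) = 2 * fsq ((1 - Ul * Ulᵀ) * U) := by
    have h1 : fsq (Ul * Ulᵀ - U * Uᵀ)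
        = 2 * (r : ℝ) - 2 * ((Ul * Ulᵀ) * (U * Uᵀ)).trace := by
      rw [fsq_eq_trace, Matrix.transpose_sub, proj_symm Ul hUl, proj_symm U hU,
        Matrix.sub_mul, Matrix.mul_sub, Matrix.mul_sub, proj_idem Ul hUl,
        proj_idem U hU, Matrix.trace_sub, Matrix.trace_sub, Matrix.trace_sub,
        Matrix.trace_mul_comm (U * Uᵀ) (Ul * Ulᵀ)]
      have t1 : (Ul * Ulᵀ).trace = (r : ℝ) := by
        rw [Matrix.trace_mul_comm, hUl, Matrix.trace_one, hcard]
      have t2 : (U * Uᵀ).trace = (r : ℝ) := by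
        rw [Matrix.trace_mul_comm, hU, Matrix.trace_one, hcard]
      rw [t1, t2]; ring
    have h2 : fsq ((1 - Ul * Ulᵀ) * U)
        = (r : ℝ) - ((Ul * Ulᵀ) * (U * Uᵀ)).trace := by
      rw [fsq_one_sub_proj Ul hUl U]
      have e2 : fsq (Ulᵀ * U) = (Uᵀ * ((Ul * Ulᵀ) * U)).trace := by
        rw [fsq_eq_trace, Matrix.transpose_mul, Matrix.transpose_transpose]
        congr 1
        rw [Matrix.mul_assoc, Matrix.mul_assoc]
      rw [e2, keytr, fsq_eq_trace U, hU, Matrix.trace_one, hcard]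
    rw [h1, h2]; ring
  -- Step B : (1 - UlUlᵀ) * (X - Xl) = ((1 - UlUlᵀ) * U) * diagonal d * Vᵀ
  have stepB : (1 - Ul * Ulᵀ) * (X - Xl)
      = ((1 - Ul * Ulᵀ) * U) * Matrix.diagonal d * Vᵀ := by
    have hPUl : (Ul * Ulᵀ) * Ul = Ul := by
      rw [Matrix.mul_assoc, hUl, Matrix.mul_one]
    have hzero : (1 - Ul * Ulᵀ) * Xl = 0 := by
      rw [Matrix.sub_mul, Matrix.one_mul, hXl, ← Matrix.mul_assoc, ← Matrix.mul_assoc,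
        hPUl, sub_self]
    rw [Matrix.mul_sub, hzero, sub_zero, hX, ← Matrix.mul_assoc, ← Matrix.mul_assoc]
  -- Step D : c^2 * fsq M ≤ fsq (M * diagonal d)
  have stepD : c ^ 2 * fsq ((1 - Ul * Ulᵀ) * U)
      ≤ fsq (((1 - Ul * Ulᵀ) * U) * Matrix.diagonal d) := by
    set M := (1 - Ul * Ulᵀ) * U with hM
    unfold fsq
    rw [Finset.mul_sum]
    refine Finset.sum_le_sum fun i _ => ?_
    rw [Finset.mul_sum]
    refine Finset.sum_le_sum fun j _ => ?_
    have hdiag : (M * Matrix.diagonal d) i j = M i j * d j := by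
      rw [Matrix.mul_apply]
      simp [Matrix.diagonal]
    rw [hdiag, mul_pow]
    have hcd : c ^ 2 ≤ (d j) ^ 2 := by nlinarith [hcle j, hc0]
    rw [mul_comm (c ^ 2)]
    exact mul_le_mul_of_nonneg_left hcd (sq_nonneg _)
  -- combine the fsq inequality
  have key : c ^ 2 * fsq (Ul * Ulᵀ - U * Uᵀ) ≤ 2 * fsq (Xl - X) := by
    calc c ^ 2 * fsq (Ul * Ulᵀ - U * Uᵀ)
        = 2 * (c ^ 2 * fsq ((1 - Ul * Ulᵀ) * U)) := by rw [stepA]; ring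
      _ ≤ 2 * fsq (((1 - Ul * Ulᵀ) * U) * Matrix.diagonal d) := by linarith [stepD]
      _ = 2 * fsq (((1 - Ul * Ulᵀ) * U) * Matrix.diagonal d * Vᵀ) := by
          rw [fsq_mul_transpose V hV]
      _ = 2 * fsq ((1 - Ul * Ulᵀ) * (X - Xl)) := by rw [stepB]
      _ ≤ 2 * fsq (X - Xl) := by linarith [fsq_proj_le Ul hUl (X - Xl)]
      _ = 2 * fsq (Xl - X) := by rw [fsq_neg_sub]
  -- conclude with square roots
  rw [frobNorm_eq, frobNorm_eq]
  have hrhs : 0 ≤ Real.sqrt 2 * Real.sqrt (fsq (Xl - X)) / c := by positivity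
  have hsq : fsq (Ul * Ulᵀ - U * Uᵀ)
      ≤ (Real.sqrt 2 * Real.sqrt (fsq (Xl - X)) / c) ^ 2 := by
    rw [div_pow, mul_pow, Real.sq_sqrt (by norm_num : (0:ℝ) ≤ 2),
      Real.sq_sqrt (fsq_nonneg _), le_div_iff₀ (by positivity)]
    linarith [key]
  exact (Real.sqrt_le_sqrt hsq).trans_eq (Real.sqrt_sq hrhs)
end

section
/- Let X_l be a rank-r n×n matrix with tangent space T_l = {U_l Z₁ᵀ + Z₂ V_lᵀ : Z₁, Z₂ ∈ ℝ^{n×r}} where X_l = U_l Σ_l V_lᵀ, and let X be another rank-r matrix. Then ‖(I − P_{T_l})(X)‖_F ≤ ‖X_l − X‖_F² / σ_min(X). -/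
open Matrix

namespace Stmt11Aux

open Matrix

variable {m n p q : Type*} [Fintype m] [Fintype n] [Fintype p] [Fintype q]

/-- Squared Frobenius norm. -/
noncomputable def S (A : Matrix m n ℝ) : ℝ := ∑ i, ∑ j, (A i j) ^ 2

lemma S_nonneg (A : Matrix m n ℝ) : 0 ≤ S A := by
  unfold S; positivity

lemma S_transpose (A : Matrix m n ℝ) : S Aᵀ = S A := by
  unfold S
  rw [Finset.sum_comm]
  rfl

lemma S_eq_trace [DecidableEq n] (A : Matrix m n ℝ) : S A = (Aᵀ * A).trace := by
  unfold S
  rw [Matrix.trace, Finset.sum_comm]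
  congr 1
  ext i
  simp [Matrix.mul_apply, Matrix.diag, sq]

/-- Cauchy–Schwarz for the Frobenius norm: `S (A*B) ≤ S A * S B`. -/
lemma S_mul_le (A : Matrix m n ℝ) (B : Matrix n p ℝ) : S (A * B) ≤ S A * S B := by
  unfold S
  calc ∑ i, ∑ j, ((A * B) i j) ^ 2
      ≤ ∑ i, ∑ j, (∑ k, (A i k) ^ 2) * (∑ k, (B k j) ^ 2) := by
        gcongr with i _ j _
        exact Finset.sum_mul_sq_le_sq_mul_sq Finset.univ _ _
    _ = (∑ i, ∑ k, (A i k) ^ 2) * (∑ j, ∑ k, (B k j) ^ 2) := by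
        rw [Finset.sum_mul]
        exact Finset.sum_congr rfl fun i _ => (Finset.mul_sum _ _ _).symm
    _ = (∑ i, ∑ k, (A i k) ^ 2) * (∑ k, ∑ j, (B k j) ^ 2) := by
        rw [Finset.sum_comm (f := fun j k => (B k j) ^ 2)]

/-- Decomposition: if `Wᵀ * W = 1` then `S (A*W) + S (A*(1 - W*Wᵀ)) = S A`. -/
lemma S_decomp [DecidableEq m] [DecidableEq p] (A : Matrix q m ℝ) (W : Matrix m p ℝ)
    (hW : Wᵀ * W = 1) : S (A * W) + S (A * (1 - W * Wᵀ)) = S A := by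
  have hproj : (1 - W * Wᵀ) * (1 - W * Wᵀ) = 1 - W * Wᵀ := by
    have : W * Wᵀ * (W * Wᵀ) = W * Wᵀ := by
      calc W * Wᵀ * (W * Wᵀ) = W * (Wᵀ * W) * Wᵀ := by
            simp [Matrix.mul_assoc]
        _ = W * Wᵀ := by rw [hW, Matrix.mul_one]
    simp [Matrix.mul_sub, Matrix.sub_mul, this]
  have h1 : S (A * W) = (Aᵀ * A * (W * Wᵀ)).trace := by
    rw [S_eq_trace, Matrix.transpose_mul]
    rw [show Wᵀ * Aᵀ * (A * W) = Wᵀ * ((Aᵀ * A) * W) by simp [Matrix.mul_assoc]]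
    rw [Matrix.trace_mul_comm, Matrix.mul_assoc]
  have h2 : S (A * (1 - W * Wᵀ)) = (Aᵀ * A * (1 - W * Wᵀ)).trace := by
    rw [S_eq_trace, Matrix.transpose_mul]
    have ht : (1 - W * Wᵀ)ᵀ = 1 - W * Wᵀ := by
      simp [Matrix.transpose_sub, Matrix.transpose_mul]
    rw [ht]
    rw [show (1 - W * Wᵀ) * Aᵀ * (A * (1 - W * Wᵀ))
        = (1 - W * Wᵀ) * ((Aᵀ * A) * (1 - W * Wᵀ)) by simp [Matrix.mul_assoc]]
    rw [Matrix.trace_mul_comm, Matrix.mul_assoc (Aᵀ * A) (1 - W * Wᵀ) (1 - W * Wᵀ), hproj]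
  rw [h1, h2, ← Matrix.trace_add, ← Matrix.mul_add,
    show W * Wᵀ + (1 - W * Wᵀ) = (1 : Matrix m m ℝ) by abel,
    Matrix.mul_one]
  exact (S_eq_trace A).symm

lemma S_mul_semiortho_le [DecidableEq m] [DecidableEq p] (A : Matrix q m ℝ) (W : Matrix m p ℝ)
    (hW : Wᵀ * W = 1) : S (A * W) ≤ S A := by
  have := S_decomp A W hW
  have h0 := S_nonneg (A * (1 - W * Wᵀ))
  linarith

lemma S_semiortho_mul_le [DecidableEq m] [DecidableEq p] (B : Matrix m q ℝ) (W : Matrix m p ℝ)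
    (hW : Wᵀ * W = 1) : S (Wᵀ * B) ≤ S B := by
  have h : (Wᵀ * B)ᵀ = Bᵀ * W := by simp [Matrix.transpose_mul]
  calc S (Wᵀ * B) = S (Bᵀ * W) := by rw [← S_transpose (Wᵀ * B), h]
    _ ≤ S Bᵀ := S_mul_semiortho_le Bᵀ W hW
    _ = S B := S_transpose B

lemma S_proj_mul_le [DecidableEq m] [DecidableEq p] (B : Matrix m q ℝ) (W : Matrix m p ℝ)
    (hW : Wᵀ * W = 1) : S ((1 - W * Wᵀ) * B) ≤ S B := by
  have ht : (1 - W * Wᵀ)ᵀ = 1 - W * Wᵀ := by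
    simp [Matrix.transpose_sub, Matrix.transpose_mul]
  have h : ((1 - W * Wᵀ) * B)ᵀ = Bᵀ * (1 - W * Wᵀ) := by
    rw [Matrix.transpose_mul, ht]
  calc S ((1 - W * Wᵀ) * B) = S (Bᵀ * (1 - W * Wᵀ)) := by
        rw [← S_transpose ((1 - W * Wᵀ) * B), h]
    _ ≤ S Bᵀ := by
        have := S_decomp Bᵀ W hW
        have h0 := S_nonneg (Bᵀ * W)
        linarith
    _ = S B := S_transpose B

lemma S_mul_proj_le [DecidableEq m] [DecidableEq p] (A : Matrix q m ℝ) (W : Matrix m p ℝ)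
    (hW : Wᵀ * W = 1) : S (A * (1 - W * Wᵀ)) ≤ S A := by
  have := S_decomp A W hW
  have h0 := S_nonneg (A * W)
  linarith

lemma S_diag_mul_le [DecidableEq m] (e : m → ℝ) (N : Matrix m q ℝ) (c : ℝ)
    (hc : ∀ i, |e i| ≤ c) : S (Matrix.diagonal e * N) ≤ c ^ 2 * S N := by
  unfold S
  rw [Finset.mul_sum]
  apply Finset.sum_le_sum
  intro i _
  rw [Finset.mul_sum]
  apply Finset.sum_le_sum
  intro j _
  rw [Matrix.diagonal_mul, mul_pow]
  have h1 : (e i) ^ 2 ≤ c ^ 2 := sq_le_sq' (by have := hc i; have := abs_nonneg (e i); linarith [neg_abs_le (e i)]) (le_trans (le_abs_self _) (hc i))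
  have h2 : 0 ≤ (N i j) ^ 2 := sq_nonneg _
  exact mul_le_mul_of_nonneg_right h1 h2

end Stmt11Aux

theorem stmt11 {n r : ℕ} [NeZero r]
    (Ul U Vl V : Matrix (Fin n) (Fin r) ℝ)
    (dl d : Fin r → ℝ) (hdl : ∀ i, 0 < dl i) (hd : ∀ i, 0 < d i)
    (hUl : Ulᵀ * Ul = 1) (hU : Uᵀ * U = 1) (hVl : Vlᵀ * Vl = 1) (hV : Vᵀ * V = 1)
    (Xl X : Matrix (Fin n) (Fin n) ℝ)
    (hXl : Xl = Ul * Matrix.diagonal dl * Vlᵀ)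
    (hX : X = U * Matrix.diagonal d * Vᵀ) :
    frobNorm (X - (Ul * Ulᵀ * X + X * (Vl * Vlᵀ) - Ul * Ulᵀ * X * (Vl * Vlᵀ)))
      ≤ (frobNorm (Xl - X)) ^ 2 / (⨅ i, d i) := by
  classical
  open Stmt11Aux in
  -- σ := infimum of d
  haveI : Nonempty (Fin r) := ⟨⟨0, Nat.pos_of_ne_zero (NeZero.ne r)⟩⟩
  set σ : ℝ := ⨅ i, d i with hσdef
  have hbdd : BddBelow (Set.range d) := (Set.finite_range d).bddBelow
  have hσle : ∀ i, σ ≤ d i := fun i => ciInf_le hbdd i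
  have hσpos : 0 < σ := by
    obtain ⟨i0, _, hi0⟩ := Finset.exists_min_image Finset.univ d ⟨Classical.arbitrary _, Finset.mem_univ _⟩
    have : d i0 ≤ σ := le_ciInf (fun i => hi0 i (Finset.mem_univ i))
    linarith [hd i0]
  set E : Matrix (Fin n) (Fin n) ℝ := X - Xl with hE
  set P : Matrix (Fin n) (Fin n) ℝ := Ul * Ulᵀ with hP
  set Q : Matrix (Fin n) (Fin n) ℝ := Vl * Vlᵀ with hQ
  set Di : Matrix (Fin r) (Fin r) ℝ := Matrix.diagonal (fun i => (d i)⁻¹) with hDi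
  -- algebraic identity
  have e1 : (1 - P) * E = (1 - P) * X := by
    have h0 : (1 - P) * Xl = 0 := by
      rw [hXl, hP, Matrix.sub_mul, Matrix.one_mul]
      rw [show Ul * Ulᵀ * (Ul * Matrix.diagonal dl * Vlᵀ)
          = Ul * (Ulᵀ * Ul) * (Matrix.diagonal dl * Vlᵀ) by simp [Matrix.mul_assoc]]
      rw [hUl, Matrix.mul_one, Matrix.mul_assoc, sub_self]
    rw [hE, Matrix.mul_sub, h0, sub_zero]
  have e2 : E * (1 - Q) = X * (1 - Q) := by
    have h0 : Xl * (1 - Q) = 0 := by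
      rw [hXl, hQ, Matrix.mul_sub, Matrix.mul_one]
      rw [show Ul * Matrix.diagonal dl * Vlᵀ * (Vl * Vlᵀ)
          = Ul * Matrix.diagonal dl * (Vlᵀ * Vl) * Vlᵀ by simp [Matrix.mul_assoc]]
      rw [hVl, Matrix.mul_one, sub_self]
    rw [hE, Matrix.sub_mul, h0, sub_zero]
  have hdd : Matrix.diagonal d * Di = 1 := by
    rw [hDi, Matrix.diagonal_mul_diagonal]
    rw [show (fun i => d i * (d i)⁻¹) = fun _ => (1:ℝ) by
      funext i; exact mul_inv_cancel₀ (ne_of_gt (hd i))]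
    exact Matrix.diagonal_one
  have e3 : X * V * Di * (Uᵀ * X) = X := by
    have hXV : X * V = U * Matrix.diagonal d := by
      rw [hX, Matrix.mul_assoc, Matrix.mul_assoc, hV, Matrix.mul_one]
    have hUX : Uᵀ * X = Matrix.diagonal d * Vᵀ := by
      rw [hX, ← Matrix.mul_assoc, ← Matrix.mul_assoc, hU, Matrix.one_mul]
    have hdd' : Di * Matrix.diagonal d = 1 := by
      rw [hDi, Matrix.diagonal_mul_diagonal]
      rw [show (fun i => (d i)⁻¹ * d i) = fun _ => (1:ℝ) by
        funext i; exact inv_mul_cancel₀ (ne_of_gt (hd i))]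
      exact Matrix.diagonal_one
    rw [hXV, hUX, Matrix.mul_assoc (U * Matrix.diagonal d), ← Matrix.mul_assoc Di, hdd',
      Matrix.one_mul, hX]
  have hR : ((1 - P) * E * V) * (Di * (Uᵀ * (E * (1 - Q))))
      = X - (P * X + X * Q - P * X * Q) := by
    have expand : (1 - P) * X * (1 - Q) = X - (P * X + X * Q - P * X * Q) := by
      noncomm_ring
    calc ((1 - P) * E * V) * (Di * (Uᵀ * (E * (1 - Q))))
        = ((1 - P) * E) * (V * Di * (Uᵀ * (E * (1 - Q)))) := by
          simp [Matrix.mul_assoc]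
      _ = ((1 - P) * X) * (V * Di * (Uᵀ * (X * (1 - Q)))) := by rw [e1, e2]
      _ = (1 - P) * (X * V * Di * (Uᵀ * X)) * (1 - Q) := by
          simp [Matrix.mul_assoc]
      _ = (1 - P) * X * (1 - Q) := by rw [e3]
      _ = X - (P * X + X * Q - P * X * Q) := expand
  -- norms
  have frob_eq : ∀ (A : Matrix (Fin n) (Fin n) ℝ), frobNorm A = Real.sqrt (S A) := by
    intro A; rfl
  have hSE := S_nonneg E
  have hA1 : S ((1 - P) * E * V) ≤ S E := by
    calc S ((1 - P) * E * V) ≤ S ((1 - P) * E) := S_mul_semiortho_le _ V hV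
      _ ≤ S E := by rw [hP]; exact S_proj_mul_le E Ul hUl
  have hB1 : S (Di * (Uᵀ * (E * (1 - Q)))) ≤ σ⁻¹ ^ 2 * S E := by
    calc S (Di * (Uᵀ * (E * (1 - Q))))
        ≤ σ⁻¹ ^ 2 * S (Uᵀ * (E * (1 - Q))) := by
          apply S_diag_mul_le
          intro i
          rw [abs_of_pos (inv_pos.mpr (hd i))]
          exact inv_anti₀ hσpos (hσle i)
      _ ≤ σ⁻¹ ^ 2 * S (E * (1 - Q)) := by
          have := S_semiortho_mul_le (E * (1 - Q)) U hU
          have h2 : (0:ℝ) ≤ σ⁻¹ ^ 2 := sq_nonneg _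
          nlinarith
      _ ≤ σ⁻¹ ^ 2 * S E := by
          have : S (E * (1 - Q)) ≤ S E := by rw [hQ]; exact S_mul_proj_le E Vl hVl
          nlinarith [sq_nonneg σ⁻¹]
  have key : S (X - (P * X + X * Q - P * X * Q)) ≤ (S E / σ) ^ 2 := by
    rw [← hR]
    calc S (((1 - P) * E * V) * (Di * (Uᵀ * (E * (1 - Q)))))
        ≤ S ((1 - P) * E * V) * S (Di * (Uᵀ * (E * (1 - Q)))) := S_mul_le _ _
      _ ≤ S E * (σ⁻¹ ^ 2 * S E) := by
          apply mul_le_mul hA1 hB1 (S_nonneg _) hSE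
      _ = (S E / σ) ^ 2 := by field_simp
  have hSXlX : S (Xl - X) = S E := by
    have : Xl - X = -E := by rw [hE]; abel
    rw [this]
    unfold Stmt11Aux.S
    simp [Matrix.neg_apply]
  have goal_lhs : frobNorm (X - (Ul * Ulᵀ * X + X * (Vl * Vlᵀ) - Ul * Ulᵀ * X * (Vl * Vlᵀ)))
      = Real.sqrt (S (X - (P * X + X * Q - P * X * Q))) := by
    rw [frob_eq, hP, hQ]
  rw [goal_lhs, frob_eq]
  have h1 : Real.sqrt (S (X - (P * X + X * Q - P * X * Q))) ≤ Real.sqrt ((S E / σ) ^ 2) :=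
    Real.sqrt_le_sqrt key
  have h2 : Real.sqrt ((S E / σ) ^ 2) = S E / σ :=
    Real.sqrt_sq (by positivity)
  have h3 : Real.sqrt (S (Xl - X)) ^ 2 = S (Xl - X) :=
    Real.sq_sqrt (S_nonneg _)
  rw [h3, hSXlX]
  linarith
end

section
/- Let X_l = U_l Σ_l V_lᵀ and X = U Σ Vᵀ be rank-r n×n matrices with tangent spaces T_l and T. Then the operator norm of P_{T_l} − P_T (acting on n×n matrices with the Frobenius norm) satisfies ‖P_{T_l} − P_T‖ ≤ 2‖X_l − X‖_F / σ_min(X). -/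
open Matrix

namespace FrobAux
variable {m n k r : ℕ}
noncomputable def fsq {m n : ℕ} (A : Matrix (Fin m) (Fin n) ℝ) : ℝ := ∑ i, ∑ j, (A i j) ^ 2
lemma fsq_nonneg (A : Matrix (Fin m) (Fin n) ℝ) : 0 ≤ fsq A :=
  Finset.sum_nonneg fun _ _ => Finset.sum_nonneg fun _ _ => sq_nonneg _
lemma frobNorm_def (A : Matrix (Fin m) (Fin n) ℝ) : frobNorm A = Real.sqrt (fsq A) := rfl
lemma frobNorm_nonneg (A : Matrix (Fin m) (Fin n) ℝ) : 0 ≤ frobNorm A := Real.sqrt_nonneg _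
lemma frobNorm_sq (A : Matrix (Fin m) (Fin n) ℝ) : frobNorm A ^ 2 = fsq A :=
  Real.sq_sqrt (fsq_nonneg A)
lemma frob_le_of_fsq_le {A : Matrix (Fin m) (Fin n) ℝ} {t : ℝ} (ht : 0 ≤ t)
    (h : fsq A ≤ t ^ 2) : frobNorm A ≤ t := by
  rw [frobNorm_def]
  calc Real.sqrt (fsq A) ≤ Real.sqrt (t ^ 2) := Real.sqrt_le_sqrt h
    _ = t := by rw [Real.sqrt_sq ht]
lemma fsq_le_of_frob_le {A : Matrix (Fin m) (Fin n) ℝ} {t : ℝ} (h : frobNorm A ≤ t) :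
    fsq A ≤ t ^ 2 := by
  rw [← frobNorm_sq]; exact pow_le_pow_left₀ (frobNorm_nonneg A) h 2
lemma fsq_eq_trace (A : Matrix (Fin m) (Fin n) ℝ) : fsq A = Matrix.trace (Aᵀ * A) := by
  unfold fsq
  simp only [Matrix.trace, Matrix.diag, Matrix.mul_apply, Matrix.transpose_apply, sq]
  exact Finset.sum_comm
lemma fsq_transpose (A : Matrix (Fin m) (Fin n) ℝ) : fsq Aᵀ = fsq A := by
  unfold fsq
  simp only [Matrix.transpose_apply]
  exact Finset.sum_comm
lemma frobNorm_transpose (A : Matrix (Fin m) (Fin n) ℝ) : frobNorm Aᵀ = frobNorm A := by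
  rw [frobNorm_def, frobNorm_def, fsq_transpose]
lemma fsq_neg (A : Matrix (Fin m) (Fin n) ℝ) : fsq (-A) = fsq A := by
  unfold fsq; simp
lemma frobNorm_neg (A : Matrix (Fin m) (Fin n) ℝ) : frobNorm (-A) = frobNorm A := by
  rw [frobNorm_def, frobNorm_def, fsq_neg]
lemma trace_form (A B : Matrix (Fin m) (Fin n) ℝ) :
    Matrix.trace (Aᵀ * B) = ∑ i, ∑ j, A i j * B i j := by
  simp only [Matrix.trace, Matrix.diag, Matrix.mul_apply, Matrix.transpose_apply]
  exact Finset.sum_comm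

lemma finp_le_frob (A B : Matrix (Fin m) (Fin n) ℝ) :
    Matrix.trace (Aᵀ * B) ≤ frobNorm A * frobNorm B := by
  rw [trace_form]
  have h2 : (∑ p : Fin m × Fin n, A p.1 p.2 * B p.1 p.2) ^ 2 ≤
      (∑ p : Fin m × Fin n, (A p.1 p.2) ^ 2) * (∑ p : Fin m × Fin n, (B p.1 p.2) ^ 2) :=
    Finset.sum_mul_sq_le_sq_mul_sq _ _ _
  have e1 : (∑ i, ∑ j, A i j * B i j) = ∑ p : Fin m × Fin n, A p.1 p.2 * B p.1 p.2 := by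
    rw [← Finset.univ_product_univ, Finset.sum_product]
  have e2 : fsq A = ∑ p : Fin m × Fin n, (A p.1 p.2) ^ 2 := by
    unfold fsq; rw [← Finset.univ_product_univ, Finset.sum_product]
  have e3 : fsq B = ∑ p : Fin m × Fin n, (B p.1 p.2) ^ 2 := by
    unfold fsq; rw [← Finset.univ_product_univ, Finset.sum_product]
  rw [e1]
  calc (∑ p : Fin m × Fin n, A p.1 p.2 * B p.1 p.2)
      ≤ |∑ p : Fin m × Fin n, A p.1 p.2 * B p.1 p.2| := le_abs_self _
    _ = Real.sqrt ((∑ p : Fin m × Fin n, A p.1 p.2 * B p.1 p.2) ^ 2) := by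
        rw [Real.sqrt_sq_eq_abs]
    _ ≤ Real.sqrt ((∑ p : Fin m × Fin n, (A p.1 p.2) ^ 2) *
          (∑ p : Fin m × Fin n, (B p.1 p.2) ^ 2)) := Real.sqrt_le_sqrt h2
    _ = frobNorm A * frobNorm B := by
        rw [frobNorm_def, frobNorm_def, e2, e3,
          Real.sqrt_mul (Finset.sum_nonneg fun _ _ => sq_nonneg _)]

lemma frob_add_le (A B : Matrix (Fin m) (Fin n) ℝ) :
    frobNorm (A + B) ≤ frobNorm A + frobNorm B := by
  have h : fsq (A + B) ≤ (frobNorm A + frobNorm B) ^ 2 := by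
    have ht : fsq (A + B) = fsq A + 2 * Matrix.trace (Aᵀ * B) + fsq B := by
      unfold fsq
      rw [trace_form]
      simp only [Matrix.add_apply, Finset.mul_sum, ← Finset.sum_add_distrib]
      apply Finset.sum_congr rfl; intro i _
      apply Finset.sum_congr rfl; intro j _
      ring
    rw [ht]
    have := finp_le_frob A B
    nlinarith [frobNorm_sq A, frobNorm_sq B]
  calc frobNorm (A + B) = Real.sqrt (fsq (A + B)) := rfl
    _ ≤ Real.sqrt ((frobNorm A + frobNorm B) ^ 2) := Real.sqrt_le_sqrt h
    _ = frobNorm A + frobNorm B :=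
        Real.sqrt_sq (add_nonneg (frobNorm_nonneg A) (frobNorm_nonneg B))

lemma frob_mul_le (A : Matrix (Fin m) (Fin n) ℝ) (B : Matrix (Fin n) (Fin k) ℝ) :
    frobNorm (A * B) ≤ frobNorm A * frobNorm B := by
  apply frob_le_of_fsq_le (mul_nonneg (frobNorm_nonneg A) (frobNorm_nonneg B))
  rw [mul_pow, frobNorm_sq, frobNorm_sq]
  unfold fsq
  calc (∑ i, ∑ j, ((A * B) i j) ^ 2)
      ≤ ∑ i, ∑ j, (∑ l, (A i l) ^ 2) * (∑ l, (B l j) ^ 2) := by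
        apply Finset.sum_le_sum; intro i _
        apply Finset.sum_le_sum; intro j _
        rw [Matrix.mul_apply]
        exact Finset.sum_mul_sq_le_sq_mul_sq _ _ _
    _ = (∑ i, ∑ l, (A i l) ^ 2) * (∑ j, ∑ l, (B l j) ^ 2) := by
        rw [← Finset.sum_mul_sum]
    _ = (∑ i, ∑ l, (A i l) ^ 2) * (∑ l, ∑ j, (B l j) ^ 2) := by
        rw [Finset.sum_comm (s := Finset.univ) (t := Finset.univ)
          (f := fun j l => (B l j) ^ 2)]

lemma fsq_semiortho {U : Matrix (Fin n) (Fin r) ℝ} (hU : Uᵀ * U = 1)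
    (M : Matrix (Fin r) (Fin k) ℝ) : fsq (U * M) = fsq M := by
  rw [fsq_eq_trace, fsq_eq_trace, Matrix.transpose_mul,
    Matrix.mul_assoc, ← Matrix.mul_assoc Uᵀ U M, hU, Matrix.one_mul]

lemma frob_semiortho {U : Matrix (Fin n) (Fin r) ℝ} (hU : Uᵀ * U = 1)
    (M : Matrix (Fin r) (Fin k) ℝ) : frobNorm (U * M) = frobNorm M := by
  rw [frobNorm_def, frobNorm_def, fsq_semiortho hU]

lemma fsq_proj_split {R : Matrix (Fin n) (Fin n) ℝ} (hsym : Rᵀ = R) (hidem : R * R = R)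
    (W : Matrix (Fin n) (Fin k) ℝ) :
    fsq (R * W) + fsq ((1 - R) * W) = fsq W := by
  have h1 : (R * W)ᵀ * (R * W) = Wᵀ * (R * W) := by
    rw [Matrix.transpose_mul, hsym, Matrix.mul_assoc, ← Matrix.mul_assoc R R W, hidem]
  have hos : (1 - R)ᵀ = 1 - R := by rw [Matrix.transpose_sub, Matrix.transpose_one, hsym]
  have hoi : (1 - R) * (1 - R) = 1 - R := by
    rw [Matrix.mul_sub, Matrix.mul_one, Matrix.sub_mul, Matrix.one_mul, hidem, sub_self,
      sub_zero]
  have h2 : ((1 - R) * W)ᵀ * ((1 - R) * W) = Wᵀ * ((1 - R) * W) := by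
    rw [Matrix.transpose_mul, hos, Matrix.mul_assoc, ← Matrix.mul_assoc (1 - R) (1 - R) W, hoi]
  rw [fsq_eq_trace, fsq_eq_trace, fsq_eq_trace, h1, h2, ← Matrix.trace_add, ← Matrix.mul_add]
  congr 2
  rw [← Matrix.add_mul]
  simp

lemma fsq_proj_le {R : Matrix (Fin n) (Fin n) ℝ} (hsym : Rᵀ = R) (hidem : R * R = R)
    (W : Matrix (Fin n) (Fin k) ℝ) : fsq (R * W) ≤ fsq W := by
  have := fsq_proj_split hsym hidem W
  have h2 := fsq_nonneg ((1 - R) * W)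
  linarith

lemma frob_proj_le {R : Matrix (Fin n) (Fin n) ℝ} (hsym : Rᵀ = R) (hidem : R * R = R)
    (W : Matrix (Fin n) (Fin k) ℝ) : frobNorm (R * W) ≤ frobNorm W := by
  apply frob_le_of_fsq_le (frobNorm_nonneg W)
  rw [frobNorm_sq]
  exact fsq_proj_le hsym hidem W

lemma frob_diag_mul_le {e : Fin r → ℝ} {c : ℝ} (hc : 0 ≤ c) (he : ∀ i, |e i| ≤ c)
    (W : Matrix (Fin r) (Fin k) ℝ) :
    frobNorm (Matrix.diagonal e * W) ≤ c * frobNorm W := by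
  apply frob_le_of_fsq_le (mul_nonneg hc (frobNorm_nonneg W))
  rw [mul_pow, frobNorm_sq]
  unfold fsq
  rw [Finset.mul_sum]
  apply Finset.sum_le_sum
  intro i _
  rw [Finset.mul_sum]
  apply Finset.sum_le_sum
  intro j _
  have : (Matrix.diagonal e * W) i j = e i * W i j := by
    simp [Matrix.mul_apply, Matrix.diagonal]
  rw [this, mul_pow]
  have h1 : (e i) ^ 2 ≤ c ^ 2 := by
    have := he i
    nlinarith [abs_nonneg (e i), sq_abs (e i)]
  nlinarith [sq_nonneg (W i j)]

lemma opb_transpose {M : Matrix (Fin n) (Fin r) ℝ} {c : ℝ} (hc : 0 ≤ c)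
    (h : ∀ (k : ℕ) (W : Matrix (Fin r) (Fin k) ℝ), frobNorm (M * W) ≤ c * frobNorm W) :
    ∀ (k : ℕ) (W : Matrix (Fin n) (Fin k) ℝ), frobNorm (Mᵀ * W) ≤ c * frobNorm W := by
  intro k W
  have key : fsq (Mᵀ * W) = Matrix.trace ((M * (Mᵀ * W))ᵀ * W) := by
    rw [fsq_eq_trace]
    simp only [Matrix.transpose_mul, Matrix.transpose_transpose, Matrix.mul_assoc]
  have h1 : fsq (Mᵀ * W) ≤ frobNorm (M * (Mᵀ * W)) * frobNorm W := by
    rw [key]; exact finp_le_frob _ _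
  have h2 : frobNorm (M * (Mᵀ * W)) ≤ c * frobNorm (Mᵀ * W) := h _ _
  set t := frobNorm (Mᵀ * W) with ht
  rcases eq_or_lt_of_le (frobNorm_nonneg (Mᵀ * W)) with h0 | h0
  · rw [ht, ← h0]; exact mul_nonneg hc (frobNorm_nonneg W)
  · have : t * t ≤ (c * frobNorm W) * t := by
      have : t ^ 2 ≤ (c * t) * frobNorm W := by
        rw [frobNorm_sq]
        exact le_trans h1 (mul_le_mul_of_nonneg_right h2 (frobNorm_nonneg W))
      nlinarith
    exact le_of_mul_le_mul_right this h0

lemma eq_zero_of_fsq_eq_zero {A : Matrix (Fin m) (Fin n) ℝ} (h : fsq A = 0) : A = 0 := by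
  unfold fsq at h
  ext i j
  have h1 : ∀ i ∈ (Finset.univ : Finset (Fin m)), (0:ℝ) ≤ ∑ j, (A i j) ^ 2 :=
    fun _ _ => Finset.sum_nonneg fun _ _ => sq_nonneg _
  have h2 := (Finset.sum_eq_zero_iff_of_nonneg h1).mp h i (Finset.mem_univ i)
  have h3 := (Finset.sum_eq_zero_iff_of_nonneg (fun _ _ => sq_nonneg (A i _))).mp h2 j
    (Finset.mem_univ j)
  have := pow_eq_zero_iff (n := 2) (by norm_num) |>.mp h3
  simpa using this

lemma lower_transpose {B : Matrix (Fin r) (Fin r) ℝ} {c : ℝ}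
    (h : ∀ (k : ℕ) (W : Matrix (Fin r) (Fin k) ℝ), c * frobNorm W ≤ frobNorm (B * W)) :
    ∀ (k : ℕ) (W : Matrix (Fin r) (Fin k) ℝ), c * frobNorm W ≤ frobNorm (Bᵀ * W) := by
  rcases le_or_gt c 0 with hc | hc
  · intro k W
    exact le_trans (mul_nonpos_of_nonpos_of_nonneg hc (frobNorm_nonneg W))
      (frobNorm_nonneg _)
  -- c > 0 : B is injective, hence invertible
  have hinj : Function.Injective B.mulVec := by
    intro v w hvw
    suffices hz : ∀ u : Fin r → ℝ, B.mulVec u = 0 → u = 0 by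
      have : B.mulVec (v - w) = 0 := by
        rw [Matrix.mulVec_sub, hvw, sub_self]
      have := hz _ this
      exact sub_eq_zero.mp this
    intro u hu
    set W : Matrix (Fin r) (Fin 1) ℝ := Matrix.of (fun i _ => u i) with hW
    have hBW : B * W = 0 := by
      ext i j
      have : (B * W) i j = B.mulVec u i := by
        simp [Matrix.mul_apply, Matrix.mulVec, dotProduct, hW]
      rw [this, hu]
      simp
    have := h 1 W
    rw [hBW] at this
    have hz : frobNorm (0 : Matrix (Fin r) (Fin 1) ℝ) = 0 := by
      rw [frobNorm_def]
      simp [fsq]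
    rw [hz] at this
    have hWn : frobNorm W = 0 :=
      le_antisymm (by nlinarith [frobNorm_nonneg W]) (frobNorm_nonneg W)
    have : fsq W = 0 := by rw [← frobNorm_sq, hWn]; ring
    have := eq_zero_of_fsq_eq_zero this
    funext i
    have := congrFun (congrFun this i) 0
    simpa [hW] using this
  have hu : IsUnit B := Matrix.mulVec_injective_iff_isUnit.mp hinj
  have hdet : IsUnit B.det := (Matrix.isUnit_iff_isUnit_det B).mp hu
  have hBBi : B * B⁻¹ = 1 := Matrix.mul_nonsing_inv B hdet
  have hstep1 : ∀ (k : ℕ) (W : Matrix (Fin r) (Fin k) ℝ),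
      frobNorm (B⁻¹ * W) ≤ c⁻¹ * frobNorm W := by
    intro k W
    have h1 := h k (B⁻¹ * W)
    rw [← Matrix.mul_assoc, hBBi, Matrix.one_mul] at h1
    rw [inv_mul_eq_div, le_div_iff₀' hc]
    exact h1
  have hstep2 := opb_transpose (inv_nonneg.mpr hc.le) hstep1
  intro k W
  have h3 := hstep2 k (Bᵀ * W)
  have h4 : B⁻¹ᵀ * (Bᵀ * W) = W := by
    rw [← Matrix.mul_assoc, ← Matrix.transpose_mul, hBBi]
    simp
  rw [h4] at h3
  rw [inv_mul_eq_div, le_div_iff₀' hc] at h3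
  exact h3

section Proj
variable {Ul U : Matrix (Fin n) (Fin r) ℝ}

lemma proj_sym (Ul : Matrix (Fin n) (Fin r) ℝ) : (Ul * Ulᵀ)ᵀ = Ul * Ulᵀ := by
  rw [Matrix.transpose_mul, Matrix.transpose_transpose]

lemma proj_idem (hUl : Ulᵀ * Ul = 1) : (Ul * Ulᵀ) * (Ul * Ulᵀ) = Ul * Ulᵀ := by
  rw [Matrix.mul_assoc, ← Matrix.mul_assoc Ulᵀ Ul Ulᵀ, hUl, Matrix.one_mul]

/-- `fsq ((1 - Ul Ulᵀ) U W) = fsq W - fsq ((Ulᵀ U) W)`. -/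
lemma fsq_comp (hUl : Ulᵀ * Ul = 1) (hU : Uᵀ * U = 1) (W : Matrix (Fin r) (Fin k) ℝ) :
    fsq ((1 - Ul * Ulᵀ) * (U * W)) = fsq W - fsq ((Ulᵀ * U) * W) := by
  have hsplit := fsq_proj_split (proj_sym Ul) (proj_idem hUl) (U * W)
  have h1 : fsq (U * W) = fsq W := fsq_semiortho hU W
  have h2 : fsq ((Ul * Ulᵀ) * (U * W)) = fsq ((Ulᵀ * U) * W) := by
    have e : (Ul * Ulᵀ) * (U * W) = Ul * ((Ulᵀ * U) * W) := by
      simp only [Matrix.mul_assoc]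
    rw [e, fsq_semiortho hUl]
  linarith

lemma sym_opb (hUl : Ulᵀ * Ul = 1) (hU : Uᵀ * U = 1) {a : ℝ} (ha : 0 ≤ a)
    (h : ∀ (k : ℕ) (W : Matrix (Fin r) (Fin k) ℝ),
      frobNorm ((1 - Ul * Ulᵀ) * (U * W)) ≤ a * frobNorm W) :
    ∀ (k : ℕ) (W : Matrix (Fin r) (Fin k) ℝ),
      frobNorm ((1 - U * Uᵀ) * (Ul * W)) ≤ a * frobNorm W := by
  have hosym : (1 - U * Uᵀ)ᵀ = 1 - U * Uᵀ := by
    rw [Matrix.transpose_sub, Matrix.transpose_one, proj_sym]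
  have hoidem : (1 - U * Uᵀ) * (1 - U * Uᵀ) = 1 - U * Uᵀ := by
    rw [Matrix.mul_sub, Matrix.mul_one, Matrix.sub_mul, Matrix.one_mul, proj_idem hU,
      sub_self, sub_zero]
  rcases le_or_gt 1 a with ha1 | ha1
  · intro k W
    calc frobNorm ((1 - U * Uᵀ) * (Ul * W)) ≤ frobNorm (Ul * W) :=
          frob_proj_le hosym hoidem _
      _ = frobNorm W := frob_semiortho hUl W
      _ ≤ a * frobNorm W := by nlinarith [frobNorm_nonneg W]
  · -- a < 1
    set c : ℝ := Real.sqrt (1 - a ^ 2) with hcdef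
    have hc2 : c ^ 2 = 1 - a ^ 2 := Real.sq_sqrt (by nlinarith)
    have hcpos : 0 < c := Real.sqrt_pos.mpr (by nlinarith)
    have hlow : ∀ (k : ℕ) (W : Matrix (Fin r) (Fin k) ℝ),
        c * frobNorm W ≤ frobNorm ((Ulᵀ * U) * W) := by
      intro k W
      have hfs := fsq_comp hUl hU W
      have hb : fsq ((1 - Ul * Ulᵀ) * (U * W)) ≤ a ^ 2 * fsq W := by
        have := fsq_le_of_frob_le (h k W)
        rw [mul_pow, frobNorm_sq] at this
        exact this
      have hge : c ^ 2 * fsq W ≤ fsq ((Ulᵀ * U) * W) := by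
        rw [hc2]; nlinarith [fsq_nonneg W]
      have : (c * frobNorm W) ^ 2 ≤ frobNorm ((Ulᵀ * U) * W) ^ 2 := by
        rw [mul_pow, frobNorm_sq, frobNorm_sq]; exact hge
      have h0 : 0 ≤ c * frobNorm W := mul_nonneg hcpos.le (frobNorm_nonneg W)
      nlinarith [frobNorm_nonneg ((Ulᵀ * U) * W)]
    have hlowT := lower_transpose hlow
    intro k W
    have hfs : fsq ((1 - U * Uᵀ) * (Ul * W)) = fsq W - fsq ((Uᵀ * Ul) * W) :=
      fsq_comp hU hUl W
    have hTeq : (Ulᵀ * U)ᵀ = Uᵀ * Ul := by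
      rw [Matrix.transpose_mul, Matrix.transpose_transpose]
    have h5 := hlowT k W
    rw [hTeq] at h5
    have h6 : c ^ 2 * fsq W ≤ fsq ((Uᵀ * Ul) * W) := by
      have := pow_le_pow_left₀ (mul_nonneg hcpos.le (frobNorm_nonneg W)) h5 2
      rw [mul_pow, frobNorm_sq, frobNorm_sq] at this
      exact this
    apply frob_le_of_fsq_le (mul_nonneg ha (frobNorm_nonneg W))
    rw [mul_pow, frobNorm_sq, hfs, hc2] at *
    nlinarith [fsq_nonneg W]

lemma pd_opb (hUl : Ulᵀ * Ul = 1) (hU : Uᵀ * U = 1) {a : ℝ} (ha : 0 ≤ a)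
    (h1 : ∀ (k : ℕ) (W : Matrix (Fin r) (Fin k) ℝ),
      frobNorm ((1 - Ul * Ulᵀ) * (U * W)) ≤ a * frobNorm W)
    (h2 : ∀ (k : ℕ) (W : Matrix (Fin r) (Fin k) ℝ),
      frobNorm ((1 - U * Uᵀ) * (Ul * W)) ≤ a * frobNorm W) :
    ∀ (k : ℕ) (W : Matrix (Fin n) (Fin k) ℝ),
      frobNorm ((Ul * Ulᵀ - U * Uᵀ) * W) ≤ a * frobNorm W := by
  intro k W
  set Pu := Ul * Ulᵀ with hPu
  set P := U * Uᵀ with hP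
  have hPusym := proj_sym Ul
  have hPuidem := proj_idem hUl
  have hPsym := proj_sym U
  have hPidem := proj_idem hU
  -- step a : orthogonal split
  have hsplit := fsq_proj_split hPusym hPuidem ((Pu - P) * W)
  -- step b
  have hb : Pu * ((Pu - P) * W) = Pu * ((1 - P) * W) := by
    rw [← Matrix.mul_assoc, ← Matrix.mul_assoc, Matrix.mul_sub, Matrix.mul_sub, hPuidem,
      Matrix.mul_one]
  -- step c
  have hcc : (1 - Pu) * ((Pu - P) * W) = -((1 - Pu) * (P * W)) := by
    have h0 : (1 - Pu) * Pu = 0 := by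
      rw [Matrix.sub_mul, Matrix.one_mul, hPuidem, sub_self]
    rw [← Matrix.mul_assoc, Matrix.mul_sub, h0, zero_sub, Matrix.neg_mul, Matrix.mul_assoc]
  -- step d : bound fsq (Pu * ((1-P) * W))
  have hosym : (1 - P)ᵀ = 1 - P := by
    rw [Matrix.transpose_sub, Matrix.transpose_one, hPsym]
  have hoidem : (1 - P) * (1 - P) = 1 - P := by
    rw [Matrix.mul_sub, Matrix.mul_one, Matrix.sub_mul, Matrix.one_mul, hPidem, sub_self,
      sub_zero]
  have h2' : ∀ (k : ℕ) (W : Matrix (Fin r) (Fin k) ℝ),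
      frobNorm (((1 - P) * Ul) * W) ≤ a * frobNorm W := by
    intro k W
    rw [Matrix.mul_assoc]
    exact h2 k W
  have h2T := opb_transpose ha h2'
  have hd : fsq (Pu * ((1 - P) * W)) ≤ a ^ 2 * fsq ((1 - P) * W) := by
    have e1 : Pu * ((1 - P) * W) = Ul * (((1 - P) * Ul)ᵀ * ((1 - P) * W)) := by
      rw [Matrix.transpose_mul, hosym]
      calc Pu * ((1 - P) * W) = Ul * (Ulᵀ * ((1 - P) * W)) := by
            rw [hPu, Matrix.mul_assoc]
        _ = Ul * (Ulᵀ * ((1 - P) * ((1 - P) * W))) := by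
            rw [← Matrix.mul_assoc (1 - P) (1 - P) W, hoidem]
        _ = Ul * ((Ulᵀ * (1 - P)) * ((1 - P) * W)) := by
            simp only [Matrix.mul_assoc]
    rw [e1, fsq_semiortho hUl]
    have := fsq_le_of_frob_le (h2T _ ((1 - P) * W))
    rw [mul_pow, frobNorm_sq] at this
    exact this
  -- step e : bound fsq ((1-Pu) * (P * W))
  have he : fsq ((1 - Pu) * (P * W)) ≤ a ^ 2 * fsq (P * W) := by
    have e1 : (1 - Pu) * (P * W) = (1 - Pu) * (U * (Uᵀ * W)) := by
      rw [hP, Matrix.mul_assoc]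
    have e2 : fsq (P * W) = fsq (Uᵀ * W) := by
      rw [hP, Matrix.mul_assoc, fsq_semiortho hU]
    rw [e1, e2]
    have := fsq_le_of_frob_le (h1 _ (Uᵀ * W))
    rw [mul_pow, frobNorm_sq] at this
    exact this
  -- step f : combine
  have hsplit2 := fsq_proj_split hPsym hPidem W
  apply frob_le_of_fsq_le (mul_nonneg ha (frobNorm_nonneg W))
  rw [mul_pow, frobNorm_sq]
  have hneg : fsq ((1 - Pu) * ((Pu - P) * W)) = fsq ((1 - Pu) * (P * W)) := by
    rw [hcc, fsq_neg]
  have hbeq : fsq (Pu * ((Pu - P) * W)) = fsq (Pu * ((1 - P) * W)) := by rw [hb]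
  nlinarith [fsq_nonneg ((Pu - P) * W)]

end Proj
end FrobAux


open FrobAux

theorem stmt12 {n r : ℕ} [NeZero r]
    (Ul U Vl V : Matrix (Fin n) (Fin r) ℝ)
    (dl d : Fin r → ℝ) (hdl : ∀ i, 0 < dl i) (hd : ∀ i, 0 < d i)
    (hUl : Ulᵀ * Ul = 1) (hU : Uᵀ * U = 1) (hVl : Vlᵀ * Vl = 1) (hV : Vᵀ * V = 1)
    (Xl X : Matrix (Fin n) (Fin n) ℝ)
    (hXl : Xl = Ul * Matrix.diagonal dl * Vlᵀ)
    (hX : X = U * Matrix.diagonal d * Vᵀ) :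
    ∀ Z : Matrix (Fin n) (Fin n) ℝ,
      frobNorm ((Ul * Ulᵀ * Z + Z * (Vl * Vlᵀ) - Ul * Ulᵀ * Z * (Vl * Vlᵀ))
          - (U * Uᵀ * Z + Z * (V * Vᵀ) - U * Uᵀ * Z * (V * Vᵀ)))
        ≤ 2 * frobNorm (Xl - X) / (⨅ i, d i) * frobNorm Z := by
  intro Z
  have hrpos : 0 < r := Nat.pos_of_ne_zero (NeZero.ne r)
  haveI : Nonempty (Fin r) := ⟨⟨0, hrpos⟩⟩
  set σ : ℝ := ⨅ i, d i with hσdef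
  have hσle : ∀ i, σ ≤ d i := fun i =>
    ciInf_le (Set.Finite.bddBelow (Set.finite_range d)) i
  have hσpos : 0 < σ := by
    obtain ⟨i0, _, hi0⟩ := Finset.exists_min_image Finset.univ d ⟨⟨0, hrpos⟩, Finset.mem_univ _⟩
    exact lt_of_lt_of_le (hd i0) (le_ciInf fun i => hi0 i (Finset.mem_univ i))
  set α : ℝ := frobNorm (Xl - X) / σ with hαdef
  have hα : 0 ≤ α := div_nonneg (frobNorm_nonneg _) hσpos.le
  set Di : Matrix (Fin r) (Fin r) ℝ := Matrix.diagonal (fun i => (d i)⁻¹) with hDi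
  have hdiag : Matrix.diagonal d * Di = 1 := by
    rw [hDi, Matrix.diagonal_mul_diagonal]
    have : (fun i => d i * (d i)⁻¹) = fun _ => (1 : ℝ) :=
      funext fun i => mul_inv_cancel₀ (hd i).ne'
    rw [this, Matrix.diagonal_one]
  have hdb : ∀ (k : ℕ) (W : Matrix (Fin r) (Fin k) ℝ),
      frobNorm (Di * W) ≤ σ⁻¹ * frobNorm W := by
    intro k W
    apply frob_diag_mul_le (inv_nonneg.mpr hσpos.le) _ W
    intro i
    rw [abs_of_pos (inv_pos.mpr (hd i))]
    exact inv_anti₀ hσpos (hσle i)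
  have hfXXl : frobNorm (X - Xl) = frobNorm (Xl - X) := by
    rw [← neg_sub Xl X, frobNorm_neg]
  -- U side
  have hP1sym : (1 - Ul * Ulᵀ)ᵀ = 1 - Ul * Ulᵀ := by
    rw [Matrix.transpose_sub, Matrix.transpose_one, proj_sym]
  have hP1idem : (1 - Ul * Ulᵀ) * (1 - Ul * Ulᵀ) = 1 - Ul * Ulᵀ := by
    rw [Matrix.mul_sub, Matrix.mul_one, Matrix.sub_mul, Matrix.one_mul, proj_idem hUl,
      sub_self, sub_zero]
  have hXV : X * V = U * Matrix.diagonal d := by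
    rw [hX, Matrix.mul_assoc (U * Matrix.diagonal d) Vᵀ V, hV, Matrix.mul_one]
  have hPuUl : (1 - Ul * Ulᵀ) * Ul = 0 := by
    rw [Matrix.sub_mul, Matrix.one_mul, Matrix.mul_assoc, hUl, Matrix.mul_one, sub_self]
  have hPuXl : (1 - Ul * Ulᵀ) * Xl = 0 := by
    have e : (1 - Ul * Ulᵀ) * Xl = (((1 - Ul * Ulᵀ) * Ul) * Matrix.diagonal dl) * Vlᵀ := by
      rw [hXl]; simp only [Matrix.mul_assoc]
    rw [e, hPuUl, Matrix.zero_mul, Matrix.zero_mul]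
  have hid : (1 - Ul * Ulᵀ) * ((X - Xl) * (V * Di)) = (1 - Ul * Ulᵀ) * U := by
    have hXVDi : X * (V * Di) = U := by
      rw [← Matrix.mul_assoc, hXV, Matrix.mul_assoc, hdiag, Matrix.mul_one]
    have h0 : (1 - Ul * Ulᵀ) * (Xl * (V * Di)) = 0 := by
      rw [← Matrix.mul_assoc, hPuXl, Matrix.zero_mul]
    rw [Matrix.sub_mul X Xl (V * Di), Matrix.mul_sub, hXVDi, h0, sub_zero]
  have opbU : ∀ (k : ℕ) (W : Matrix (Fin r) (Fin k) ℝ),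
      frobNorm ((1 - Ul * Ulᵀ) * (U * W)) ≤ α * frobNorm W := by
    intro k W
    have e : (1 - Ul * Ulᵀ) * (U * W) = (1 - Ul * Ulᵀ) * ((X - Xl) * (V * (Di * W))) := by
      calc (1 - Ul * Ulᵀ) * (U * W) = ((1 - Ul * Ulᵀ) * U) * W := by rw [Matrix.mul_assoc]
        _ = ((1 - Ul * Ulᵀ) * ((X - Xl) * (V * Di))) * W := by rw [← hid]
        _ = _ := by simp only [Matrix.mul_assoc]
    calc frobNorm ((1 - Ul * Ulᵀ) * (U * W))
        = frobNorm ((1 - Ul * Ulᵀ) * ((X - Xl) * (V * (Di * W)))) := by rw [e]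
      _ ≤ frobNorm ((X - Xl) * (V * (Di * W))) := frob_proj_le hP1sym hP1idem _
      _ ≤ frobNorm (X - Xl) * frobNorm (V * (Di * W)) := frob_mul_le _ _
      _ = frobNorm (X - Xl) * frobNorm (Di * W) := by rw [frob_semiortho hV]
      _ ≤ frobNorm (X - Xl) * (σ⁻¹ * frobNorm W) := by
          exact mul_le_mul_of_nonneg_left (hdb k W) (frobNorm_nonneg _)
      _ = α * frobNorm W := by rw [hfXXl, hαdef]; ring
  -- V side
  have hQ1sym : (1 - Vl * Vlᵀ)ᵀ = 1 - Vl * Vlᵀ := by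
    rw [Matrix.transpose_sub, Matrix.transpose_one, proj_sym]
  have hQ1idem : (1 - Vl * Vlᵀ) * (1 - Vl * Vlᵀ) = 1 - Vl * Vlᵀ := by
    rw [Matrix.mul_sub, Matrix.mul_one, Matrix.sub_mul, Matrix.one_mul, proj_idem hVl,
      sub_self, sub_zero]
  have hXTU : Xᵀ * U = V * Matrix.diagonal d := by
    rw [hX, Matrix.transpose_mul, Matrix.transpose_mul, Matrix.transpose_transpose,
      Matrix.diagonal_transpose]
    simp only [Matrix.mul_assoc]
    rw [hU, Matrix.mul_one]
  have hQvVl : (1 - Vl * Vlᵀ) * Vl = 0 := by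
    rw [Matrix.sub_mul, Matrix.one_mul, Matrix.mul_assoc, hVl, Matrix.mul_one, sub_self]
  have hQvXlT : (1 - Vl * Vlᵀ) * Xlᵀ = 0 := by
    have eXlT : Xlᵀ = Vl * Matrix.diagonal dl * Ulᵀ := by
      rw [hXl, Matrix.transpose_mul, Matrix.transpose_mul, Matrix.transpose_transpose,
        Matrix.diagonal_transpose, Matrix.mul_assoc]
    have e : (1 - Vl * Vlᵀ) * Xlᵀ = (((1 - Vl * Vlᵀ) * Vl) * Matrix.diagonal dl) * Ulᵀ := by
      rw [eXlT]; simp only [Matrix.mul_assoc]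
    rw [e, hQvVl, Matrix.zero_mul, Matrix.zero_mul]
  have hidV : (1 - Vl * Vlᵀ) * ((X - Xl)ᵀ * (U * Di)) = (1 - Vl * Vlᵀ) * V := by
    have hXTUDi : Xᵀ * (U * Di) = V := by
      rw [← Matrix.mul_assoc, hXTU, Matrix.mul_assoc, hdiag, Matrix.mul_one]
    have h0 : (1 - Vl * Vlᵀ) * (Xlᵀ * (U * Di)) = 0 := by
      rw [← Matrix.mul_assoc, hQvXlT, Matrix.zero_mul]
    rw [Matrix.transpose_sub, Matrix.sub_mul Xᵀ Xlᵀ (U * Di), Matrix.mul_sub, hXTUDi, h0,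
      sub_zero]
  have opbV : ∀ (k : ℕ) (W : Matrix (Fin r) (Fin k) ℝ),
      frobNorm ((1 - Vl * Vlᵀ) * (V * W)) ≤ α * frobNorm W := by
    intro k W
    have e : (1 - Vl * Vlᵀ) * (V * W) = (1 - Vl * Vlᵀ) * ((X - Xl)ᵀ * (U * (Di * W))) := by
      calc (1 - Vl * Vlᵀ) * (V * W) = ((1 - Vl * Vlᵀ) * V) * W := by rw [Matrix.mul_assoc]
        _ = ((1 - Vl * Vlᵀ) * ((X - Xl)ᵀ * (U * Di))) * W := by rw [← hidV]
        _ = _ := by simp only [Matrix.mul_assoc]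
    calc frobNorm ((1 - Vl * Vlᵀ) * (V * W))
        = frobNorm ((1 - Vl * Vlᵀ) * ((X - Xl)ᵀ * (U * (Di * W)))) := by rw [e]
      _ ≤ frobNorm ((X - Xl)ᵀ * (U * (Di * W))) := frob_proj_le hQ1sym hQ1idem _
      _ ≤ frobNorm ((X - Xl)ᵀ) * frobNorm (U * (Di * W)) := frob_mul_le _ _
      _ = frobNorm (X - Xl) * frobNorm (Di * W) := by
          rw [frobNorm_transpose, frob_semiortho hU]
      _ ≤ frobNorm (X - Xl) * (σ⁻¹ * frobNorm W) := by
          exact mul_le_mul_of_nonneg_left (hdb k W) (frobNorm_nonneg _)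
      _ = α * frobNorm W := by rw [hfXXl, hαdef]; ring
  -- projection difference bounds
  have PDU := pd_opb hUl hU hα opbU (sym_opb hUl hU hα opbU)
  have PDV := pd_opb hVl hV hα opbV (sym_opb hVl hV hα opbV)
  -- decomposition
  have hdec : (Ul * Ulᵀ * Z + Z * (Vl * Vlᵀ) - Ul * Ulᵀ * Z * (Vl * Vlᵀ))
        - (U * Uᵀ * Z + Z * (V * Vᵀ) - U * Uᵀ * Z * (V * Vᵀ))
      = (Ul * Ulᵀ - U * Uᵀ) * (Z * (1 - V * Vᵀ))
        + ((1 - Ul * Ulᵀ) * Z) * (Vl * Vlᵀ - V * Vᵀ) := by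
    noncomm_ring
  -- bounds for the two pieces
  have hQsym : (1 - V * Vᵀ)ᵀ = 1 - V * Vᵀ := by
    rw [Matrix.transpose_sub, Matrix.transpose_one, proj_sym]
  have hQidem : (1 - V * Vᵀ) * (1 - V * Vᵀ) = 1 - V * Vᵀ := by
    rw [Matrix.mul_sub, Matrix.mul_one, Matrix.sub_mul, Matrix.one_mul, proj_idem hV,
      sub_self, sub_zero]
  have hPusym : (1 - Ul * Ulᵀ)ᵀ = 1 - Ul * Ulᵀ := hP1sym
  have hT1 : frobNorm ((Ul * Ulᵀ - U * Uᵀ) * (Z * (1 - V * Vᵀ))) ≤ α * frobNorm Z := by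
    calc frobNorm ((Ul * Ulᵀ - U * Uᵀ) * (Z * (1 - V * Vᵀ)))
        ≤ α * frobNorm (Z * (1 - V * Vᵀ)) := PDU n _
      _ ≤ α * frobNorm Z := by
          apply mul_le_mul_of_nonneg_left _ hα
          rw [← frobNorm_transpose (Z * (1 - V * Vᵀ)), Matrix.transpose_mul, hQsym]
          calc frobNorm ((1 - V * Vᵀ) * Zᵀ) ≤ frobNorm Zᵀ := frob_proj_le hQsym hQidem _
            _ = frobNorm Z := frobNorm_transpose Z
  have hT2 : frobNorm (((1 - Ul * Ulᵀ) * Z) * (Vl * Vlᵀ - V * Vᵀ)) ≤ α * frobNorm Z := by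
    have hVsym : (Vl * Vlᵀ - V * Vᵀ)ᵀ = Vl * Vlᵀ - V * Vᵀ := by
      rw [Matrix.transpose_sub, proj_sym, proj_sym]
    calc frobNorm (((1 - Ul * Ulᵀ) * Z) * (Vl * Vlᵀ - V * Vᵀ))
        = frobNorm ((Vl * Vlᵀ - V * Vᵀ) * ((1 - Ul * Ulᵀ) * Z)ᵀ) := by
          rw [← frobNorm_transpose (((1 - Ul * Ulᵀ) * Z) * (Vl * Vlᵀ - V * Vᵀ)),
            Matrix.transpose_mul, hVsym]
      _ ≤ α * frobNorm (((1 - Ul * Ulᵀ) * Z)ᵀ) := PDV n _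
      _ = α * frobNorm ((1 - Ul * Ulᵀ) * Z) := by rw [frobNorm_transpose]
      _ ≤ α * frobNorm Z := by
          exact mul_le_mul_of_nonneg_left (frob_proj_le hPusym hP1idem Z) hα
  calc frobNorm ((Ul * Ulᵀ * Z + Z * (Vl * Vlᵀ) - Ul * Ulᵀ * Z * (Vl * Vlᵀ))
          - (U * Uᵀ * Z + Z * (V * Vᵀ) - U * Uᵀ * Z * (V * Vᵀ)))
      = frobNorm ((Ul * Ulᵀ - U * Uᵀ) * (Z * (1 - V * Vᵀ))
          + ((1 - Ul * Ulᵀ) * Z) * (Vl * Vlᵀ - V * Vᵀ)) := by rw [hdec]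
    _ ≤ frobNorm ((Ul * Ulᵀ - U * Uᵀ) * (Z * (1 - V * Vᵀ)))
          + frobNorm (((1 - Ul * Ulᵀ) * Z) * (Vl * Vlᵀ - V * Vᵀ)) := frob_add_le _ _
    _ ≤ α * frobNorm Z + α * frobNorm Z := add_le_add hT1 hT2
    _ = 2 * frobNorm (Xl - X) / σ * frobNorm Z := by rw [hαdef]; ring
end

section
/- Let X_l = U_lΣ_lV_lᵀ be an estimate of the rank-r matrix X = UΣVᵀ with d = ‖X_l − X‖_F ≤ σ_min(X)/(10√2). Suppose there exist orthogonal Q_u, Q_v ∈ ℝ^{r×r} with ‖U_l − UQ_u‖_F ≤ √2 d/σ_min(X) and ‖V_l − VQ_v‖_F ≤ √2 d/σ_min(X). Then ‖Σ_l − Q_uᵀΣQ_v‖_F ≤ 4κ d, where κ = σ_max(X)/σ_min(X). -/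
open Matrix

lemma frobNorm_nonneg {m n : ℕ} (A : Matrix (Fin m) (Fin n) ℝ) : 0 ≤ frobNorm A :=
  Real.sqrt_nonneg _

lemma frobNorm_eq_norm {m n : ℕ} (A : Matrix (Fin m) (Fin n) ℝ) :
    frobNorm A = ‖(EuclideanSpace.equiv (Fin m × Fin n) ℝ).symm (fun p => A p.1 p.2)‖ := by
  rw [EuclideanSpace.norm_eq, frobNorm, Fintype.sum_prod_type]
  simp [Real.norm_eq_abs, sq_abs]

lemma frobNorm_add_le {m n : ℕ} (A B : Matrix (Fin m) (Fin n) ℝ) :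
    frobNorm (A + B) ≤ frobNorm A + frobNorm B := by
  rw [frobNorm_eq_norm, frobNorm_eq_norm, frobNorm_eq_norm]
  exact le_trans (le_of_eq (by congr)) (norm_add_le _ _)

lemma frobNorm_transpose {m n : ℕ} (A : Matrix (Fin m) (Fin n) ℝ) :
    frobNorm Aᵀ = frobNorm A := by
  rw [frobNorm, frobNorm, Finset.sum_comm]
  rfl

lemma frobNorm_sq {m n : ℕ} (A : Matrix (Fin m) (Fin n) ℝ) :
    frobNorm A ^ 2 = ∑ i, ∑ j, (A i j) ^ 2 := by
  rw [frobNorm, Real.sq_sqrt]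
  positivity

lemma sum_sq_eq_trace {m n : ℕ} (A : Matrix (Fin m) (Fin n) ℝ) :
    (∑ i, ∑ j, (A i j) ^ 2) = (Aᵀ * A).trace := by
  rw [Matrix.trace, Finset.sum_comm]
  simp [Matrix.diag, Matrix.mul_apply, sq]

lemma frobNorm_le_of_sq_le {m n p q : ℕ} (A : Matrix (Fin m) (Fin n) ℝ)
    (B : Matrix (Fin p) (Fin q) ℝ)
    (h : (∑ i, ∑ j, (A i j) ^ 2) ≤ (∑ i, ∑ j, (B i j) ^ 2)) :
    frobNorm A ≤ frobNorm B := Real.sqrt_le_sqrt h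

lemma left_isometry {m r k : ℕ} (W : Matrix (Fin m) (Fin r) ℝ) (hW : Wᵀ * W = 1)
    (A : Matrix (Fin r) (Fin k) ℝ) : frobNorm (W * A) = frobNorm A := by
  have hW' : ∀ {k : ℕ} (X : Matrix (Fin r) (Fin k) ℝ), Wᵀ * (W * X) = X := by
    intro k X; rw [← Matrix.mul_assoc, hW, Matrix.one_mul]
  rw [frobNorm, frobNorm, sum_sq_eq_trace, sum_sq_eq_trace]
  congr 1
  simp [Matrix.transpose_mul, Matrix.mul_assoc, hW']

lemma left_contract {m r k : ℕ} (W : Matrix (Fin m) (Fin r) ℝ) (hW : Wᵀ * W = 1)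
    (A : Matrix (Fin m) (Fin k) ℝ) : frobNorm (Wᵀ * A) ≤ frobNorm A := by
  have hW' : ∀ {k : ℕ} (X : Matrix (Fin r) (Fin k) ℝ), Wᵀ * (W * X) = X := by
    intro k X; rw [← Matrix.mul_assoc, hW, Matrix.one_mul]
  apply frobNorm_le_of_sq_le
  rw [sum_sq_eq_trace, sum_sq_eq_trace]
  set P := W * (Wᵀ * A) with hP
  have key : (A - P)ᵀ * (A - P) + (Wᵀ * A)ᵀ * (Wᵀ * A) = Aᵀ * A := by
    simp only [hP, Matrix.transpose_sub, Matrix.sub_mul, Matrix.mul_sub,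
      Matrix.transpose_mul, Matrix.transpose_transpose, Matrix.mul_assoc, hW']
    abel
  have h2 : 0 ≤ ((A - P)ᵀ * (A - P)).trace := by
    rw [← sum_sq_eq_trace]; positivity
  have h3 := congrArg Matrix.trace key
  rw [Matrix.trace_add] at h3
  linarith

lemma right_contract {m r k : ℕ} (W : Matrix (Fin m) (Fin r) ℝ) (hW : Wᵀ * W = 1)
    (A : Matrix (Fin k) (Fin m) ℝ) : frobNorm (A * W) ≤ frobNorm A := by
  rw [← frobNorm_transpose (A * W), ← frobNorm_transpose A, Matrix.transpose_mul]
  exact left_contract W hW Aᵀ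

lemma diag_contract {r k : ℕ} (s : Fin r → ℝ) (c : ℝ) (hc : 0 ≤ c)
    (hsc : ∀ i, |s i| ≤ c) (A : Matrix (Fin r) (Fin k) ℝ) :
    frobNorm (Matrix.diagonal s * A) ≤ c * frobNorm A := by
  have : c * frobNorm A = Real.sqrt (c ^ 2 * ∑ i, ∑ j, (A i j) ^ 2) := by
    rw [Real.sqrt_mul (by positivity), Real.sqrt_sq hc, frobNorm]
  rw [this, frobNorm]
  apply Real.sqrt_le_sqrt
  rw [Finset.mul_sum]
  apply Finset.sum_le_sum
  intro i _
  rw [Finset.mul_sum]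
  apply Finset.sum_le_sum
  intro j _
  rw [Matrix.diagonal_mul, mul_pow]
  have := hsc i
  have h2 : (s i) ^ 2 ≤ c ^ 2 := by
    rw [← sq_abs]; exact pow_le_pow_left₀ (abs_nonneg _) this 2
  nlinarith [sq_nonneg (A i j)]

theorem stmt19 {n r : ℕ} [NeZero r]
    (Ul U Vl V : Matrix (Fin n) (Fin r) ℝ)
    (Sl : Matrix (Fin r) (Fin r) ℝ) (s : Fin r → ℝ) (hs : ∀ i, 0 < s i)
    (hUl : Ulᵀ * Ul = 1) (hU : Uᵀ * U = 1) (hVl : Vlᵀ * Vl = 1) (hV : Vᵀ * V = 1)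
    (Xl X : Matrix (Fin n) (Fin n) ℝ)
    (hXl : Xl = Ul * Sl * Vlᵀ) (hX : X = U * Matrix.diagonal s * Vᵀ)
    (d κ : ℝ) (hd : d = frobNorm (Xl - X))
    (hκ : κ = (⨆ i, s i) / (⨅ i, s i))
    (hdsmall : d ≤ (⨅ i, s i) / (10 * Real.sqrt 2))
    (Qu Qv : Matrix (Fin r) (Fin r) ℝ)
    (hQu : Quᵀ * Qu = 1) (hQv : Qvᵀ * Qv = 1)
    (hUQ : frobNorm (Ul - U * Qu) ≤ Real.sqrt 2 * d / (⨅ i, s i))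
    (hVQ : frobNorm (Vl - V * Qv) ≤ Real.sqrt 2 * d / (⨅ i, s i)) :
    frobNorm (Sl - Quᵀ * Matrix.diagonal s * Qv) ≤ 4 * κ * d := by
  have hne : Nonempty (Fin r) := ⟨⟨0, Nat.pos_of_ne_zero (NeZero.ne r)⟩⟩
  set smin := ⨅ i, s i with hsmin
  set smax := ⨆ i, s i with hsmax
  set D := Matrix.diagonal s with hD
  have hsmin_pos : 0 < smin := by
    obtain ⟨i0, hi0⟩ := Finite.exists_min s
    exact lt_of_lt_of_le (hs i0) (le_ciInf hi0)
  have hle_smax : ∀ i, s i ≤ smax := fun i =>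
    le_ciSup (Set.Finite.bddAbove (Set.finite_range s)) i
  have hsmin_le : ∀ i, smin ≤ s i := fun i =>
    ciInf_le (Set.Finite.bddBelow (Set.finite_range s)) i
  have hsmax_pos : 0 < smax :=
    lt_of_lt_of_le (hs (Classical.arbitrary _)) (hle_smax _)
  have hminmax : smin ≤ smax := le_trans (hsmin_le (Classical.arbitrary _)) (hle_smax _)
  have hκ1 : 1 ≤ κ := by rw [hκ]; rw [le_div_iff₀ hsmin_pos]; linarith
  have hd0 : 0 ≤ d := hd ▸ frobNorm_nonneg _
  -- generic bound for P * D * Qᵀ * B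
  have habs : ∀ i, |s i| ≤ smax := fun i => by
    rw [abs_of_pos (hs i)]; exact hle_smax i
  have bUDV : ∀ (P Q : Matrix (Fin n) (Fin r) ℝ), Pᵀ * P = 1 → Qᵀ * Q = 1 →
      ∀ (B : Matrix (Fin n) (Fin r) ℝ),
      frobNorm (P * (D * (Qᵀ * B))) ≤ smax * frobNorm B := by
    intro P Q hP hQ B
    rw [left_isometry P hP]
    calc frobNorm (D * (Qᵀ * B)) ≤ smax * frobNorm (Qᵀ * B) :=
          diag_contract s smax (le_of_lt hsmax_pos) habs _
      _ ≤ smax * frobNorm B :=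
          mul_le_mul_of_nonneg_left (left_contract Q hQ B) (le_of_lt hsmax_pos)
  have hXB : ∀ (B : Matrix (Fin n) (Fin r) ℝ),
      frobNorm (X * B) ≤ smax * frobNorm B := by
    intro B
    have : X * B = U * (D * (Vᵀ * B)) := by rw [hX]; simp [Matrix.mul_assoc]
    rw [this]; exact bUDV U V hU hV B
  have hXtB : ∀ (B : Matrix (Fin n) (Fin r) ℝ),
      frobNorm (Xᵀ * B) ≤ smax * frobNorm B := by
    intro B
    have : Xᵀ * B = V * (D * (Uᵀ * B)) := by
      rw [hX]
      simp [hD, Matrix.transpose_mul, Matrix.diagonal_transpose, Matrix.mul_assoc]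
    rw [this]; exact bUDV V U hV hU B
  -- identification of Sl and Quᵀ D Qv
  have eqSl : Sl = Ulᵀ * ((Xl - X) * Vl) + (Ulᵀ * (X * Vl)) := by
    have : Ulᵀ * (Xl * Vl) = Sl := by
      rw [hXl, show Ulᵀ * (Ul * Sl * Vlᵀ * Vl) = (Ulᵀ * Ul) * Sl * (Vlᵀ * Vl) by
        simp [Matrix.mul_assoc], hUl, hVl, Matrix.one_mul, Matrix.mul_one]
    rw [← this]
    simp [Matrix.sub_mul, Matrix.mul_sub]
  have eqD : Quᵀ * D * Qv = (U * Qu)ᵀ * (X * (V * Qv)) := by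
    rw [hX]
    rw [show (U * Qu)ᵀ * (U * D * Vᵀ * (V * Qv)) =
        Quᵀ * ((Uᵀ * U) * (D * ((Vᵀ * V) * Qv))) by
      simp [Matrix.transpose_mul, Matrix.mul_assoc], hU, hV]
    simp [Matrix.mul_assoc]
  -- decomposition
  have hdecomp : Sl - Quᵀ * D * Qv =
      Ulᵀ * ((Xl - X) * Vl) + ((Ul - U * Qu)ᵀ * X * Vl
        + (U * Qu)ᵀ * (X * (Vl - V * Qv))) := by
    rw [eqSl, eqD]
    simp only [Matrix.sub_mul, Matrix.mul_sub, Matrix.transpose_sub, Matrix.mul_assoc]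
    abel
  rw [hdecomp]
  -- bound three terms
  have b1 : frobNorm (Ulᵀ * ((Xl - X) * Vl)) ≤ d := by
    calc frobNorm (Ulᵀ * ((Xl - X) * Vl)) ≤ frobNorm ((Xl - X) * Vl) :=
          left_contract Ul hUl _
      _ ≤ frobNorm (Xl - X) := right_contract Vl hVl _
      _ = d := hd.symm
  have b2 : frobNorm ((Ul - U * Qu)ᵀ * X * Vl) ≤ smax * (Real.sqrt 2 * d / smin) := by
    calc frobNorm ((Ul - U * Qu)ᵀ * X * Vl) ≤ frobNorm ((Ul - U * Qu)ᵀ * X) :=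
          right_contract Vl hVl _
      _ = frobNorm (((Ul - U * Qu)ᵀ * X)ᵀ) := (frobNorm_transpose _).symm
      _ = frobNorm (Xᵀ * (Ul - U * Qu)) := by
          rw [Matrix.transpose_mul, Matrix.transpose_transpose]
      _ ≤ smax * frobNorm (Ul - U * Qu) := hXtB _
      _ ≤ smax * (Real.sqrt 2 * d / smin) :=
          mul_le_mul_of_nonneg_left hUQ (le_of_lt hsmax_pos)
  have hUQu : (U * Qu)ᵀ * (U * Qu) = 1 := by
    rw [Matrix.transpose_mul, show Quᵀ * Uᵀ * (U * Qu) = Quᵀ * ((Uᵀ * U) * Qu) by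
      simp [Matrix.mul_assoc], hU, Matrix.one_mul, hQu]
  have b3 : frobNorm ((U * Qu)ᵀ * (X * (Vl - V * Qv))) ≤
      smax * (Real.sqrt 2 * d / smin) := by
    calc frobNorm ((U * Qu)ᵀ * (X * (Vl - V * Qv)))
        ≤ frobNorm (X * (Vl - V * Qv)) := left_contract _ hUQu _
      _ ≤ smax * frobNorm (Vl - V * Qv) := hXB _
      _ ≤ smax * (Real.sqrt 2 * d / smin) :=
          mul_le_mul_of_nonneg_left hVQ (le_of_lt hsmax_pos)
  have tri : frobNorm (Ulᵀ * ((Xl - X) * Vl) + ((Ul - U * Qu)ᵀ * X * Vl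
        + (U * Qu)ᵀ * (X * (Vl - V * Qv)))) ≤
      d + (smax * (Real.sqrt 2 * d / smin) + smax * (Real.sqrt 2 * d / smin)) := by
    calc _ ≤ frobNorm (Ulᵀ * ((Xl - X) * Vl)) + frobNorm ((Ul - U * Qu)ᵀ * X * Vl
          + (U * Qu)ᵀ * (X * (Vl - V * Qv))) := frobNorm_add_le _ _
      _ ≤ frobNorm (Ulᵀ * ((Xl - X) * Vl)) + (frobNorm ((Ul - U * Qu)ᵀ * X * Vl)
          + frobNorm ((U * Qu)ᵀ * (X * (Vl - V * Qv)))) := by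
          gcongr; exact frobNorm_add_le _ _
      _ ≤ _ := by gcongr
  refine le_trans tri ?_
  have hterm : smax * (Real.sqrt 2 * d / smin) = Real.sqrt 2 * (κ * d) := by
    rw [hκ]; field_simp
  rw [hterm]
  have hs2 : Real.sqrt 2 ≤ 3 / 2 := by
    rw [show (3:ℝ)/2 = Real.sqrt ((3/2)^2) by rw [Real.sqrt_sq]; norm_num]
    apply Real.sqrt_le_sqrt; norm_num
  have hκd : 0 ≤ κ * d := mul_nonneg (by linarith) hd0
  nlinarith [mul_le_mul_of_nonneg_right hs2 hκd]
end
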